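/- arXiv:1102.2122 — 7 statements merged into one kernel-verified Lean document; each statement's English description precedes it below -/
import Mathlib

section
/- Let C be a self-complementary code over F_q of length n (i.e., for all c ∈ C and ω ∈ F_q, the vector (ω,...,ω)+c is in C) that has strength 2. Then the covering radius of C satisfies ρ(C) ≤ (q-1)n/q − √n/q. -/
/-!
Fix `x` and let `M` be the largest agreement of `x` with a codeword. For `c ∈ C` the agreements
`a ω = agreement x (ω + c)`, `ω ∈ F`, sum to `n` and are at most `M`, because the translates of `c`
lie in `C`; this bounds `∑ ω, a ω ^ 2` by `n ^ 2 - 2 (q - 1) M n + q (q - 1) M ^ 2`. Averaged over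
`C`, on the other hand, `∑ ω, a ω ^ 2` is fixed by the strength: it equals `n (q + n - 1) / q`.
Comparing the two gives `n ≤ (q M - n) ^ 2`, so the distance `n - M` from `x` to `C` is at most
`((q - 1) n - √n) / q`.
-/

/-- The covering radius of a code `C ⊆ F^n`: the maximum over all vectors `x` of the
minimum Hamming distance from `x` to a codeword. -/
noncomputable def coveringRadius {n : ℕ} {F : Type} [Fintype F] [DecidableEq F]
    (C : Finset (Fin n → F)) : ℕ :=
  Finset.univ.sup fun x : Fin n → F => sInf {d : ℕ | ∃ c ∈ C, d = hammingDist x c}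

open Finset

/-- Each `a i` lies in `[t - (#s - 1) * M, M]`; summing `(M - a i) * (a i - (t - (#s - 1) * M)) ≥ 0`
gives the bound. -/
theorem sum_sq_le_of_sum_eq_of_le {α : Type*} (s : Finset α) (a : α → ℝ) {t M : ℝ}
    (hsum : ∑ i ∈ s, a i = t) (hM : ∀ i ∈ s, a i ≤ M) :
    ∑ i ∈ s, a i ^ 2 ≤ t ^ 2 - 2 * (#s - 1) * M * t + #s * (#s - 1) * M ^ 2 := by
  classical
  have hlow : ∀ i ∈ s, t - (#s - 1) * M ≤ a i := by
    intro i hi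
    have h := sum_le_card_nsmul (s.erase i) a M fun j hj => hM j (mem_of_mem_erase hj)
    rw [card_erase_of_mem hi, nsmul_eq_mul, Nat.cast_sub (card_pos.2 ⟨i, hi⟩), Nat.cast_one] at h
    linarith [add_sum_erase s a hi]
  calc ∑ i ∈ s, a i ^ 2
      ≤ ∑ i ∈ s, ((M + (t - (#s - 1) * M)) * a i - M * (t - (#s - 1) * M)) :=
        sum_le_sum fun i hi => by
          nlinarith [mul_nonneg (sub_nonneg.2 (hM i hi)) (sub_nonneg.2 (hlow i hi))]
    _ = _ := by
        rw [sum_sub_distrib, ← mul_sum, hsum, sum_const, nsmul_eq_mul]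
        ring

section Agreement

variable {ι β : Type*} [Fintype ι] [DecidableEq β]

def agreement (x y : ι → β) : ℕ := #{i | x i = y i}

theorem hammingDist_add_agreement (x y : ι → β) :
    hammingDist x y + agreement x y = Fintype.card ι := by
  rw [add_comm, hammingDist, agreement, card_filter_add_card_filter_not, card_univ]

theorem sum_agreement_const_add [AddGroup β] [Fintype β] (x c : ι → β) :
    ∑ ω : β, agreement x ((fun _ => ω) + c) = Fintype.card ι := by
  simp_rw [agreement, card_filter, Pi.add_apply, ← sub_eq_iff_eq_add]
  rw [sum_comm]
  simp

end Agreement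

section Strength

variable {ι β : Type*} [DecidableEq β]

def HasStrengthTwo (C : Finset (ι → β)) (lam : ℕ) : Prop :=
  ∀ i j, i ≠ j → ∀ a b, #{c ∈ C | c i = a ∧ c j = b} = lam

namespace HasStrengthTwo

variable [Fintype β] {C : Finset (ι → β)} {lam : ℕ}

theorem card_filter_eq (h : HasStrengthTwo C lam) {i j : ι} (hij : i ≠ j) (a : β) :
    #{c ∈ C | c i = a} = Fintype.card β * lam := by
  rw [card_eq_sum_card_fiberwise (f := fun c => c j) (t := univ) fun _ _ => mem_coe.2 (mem_univ _)]
  simp_rw [filter_filter, h i j hij]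
  simp

theorem card_eq [Nontrivial ι] (h : HasStrengthTwo C lam) : #C = Fintype.card β ^ 2 * lam := by
  obtain ⟨i, j, hij⟩ := exists_pair_ne ι
  rw [card_eq_sum_card_fiberwise (f := fun c => c i) (t := univ) fun _ _ => mem_coe.2 (mem_univ _)]
  simp_rw [h.card_filter_eq hij]
  simp [sq, mul_assoc]

theorem sum_agreement_sq [Fintype ι] [Nontrivial ι] (h : HasStrengthTwo C lam)
    (y : ι → β) :
    ∑ c ∈ C, agreement y c ^ 2
      = Fintype.card ι * (Fintype.card β * lam + (Fintype.card ι - 1) * lam) := by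
  classical
  have hpair : ∀ i j, #{c ∈ C | y i = c i ∧ y j = c j}
      = if i = j then Fintype.card β * lam else lam := by
    intro i j
    simp_rw [eq_comm (a := y _)]
    split_ifs with hij
    · subst hij
      obtain ⟨j, hj⟩ := exists_ne i
      simpa only [and_self] using h.card_filter_eq hj.symm (y i)
    · exact h i j hij _ _
  calc ∑ c ∈ C, agreement y c ^ 2
      = ∑ c ∈ C, ∑ i, ∑ j, if y i = c i ∧ y j = c j then 1 else 0 := by
        simp_rw [agreement, card_filter, sq, sum_mul_sum, ite_zero_mul_ite_zero, mul_one]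
    _ = ∑ i, ∑ j, #{c ∈ C | y i = c i ∧ y j = c j} := by
        rw [sum_comm]
        simp_rw [sum_comm (s := C), card_filter]
    _ = _ := by
        simp [hpair, sum_ite, filter_ne, filter_eq]

end HasStrengthTwo

end Strength

section SelfComplementary

variable {ι β : Type*}

def IsSelfComplementary [Add β] (C : Finset (ι → β)) : Prop :=
  ∀ c ∈ C, ∀ ω : β, (fun _ => ω) + c ∈ C

namespace IsSelfComplementary

variable [AddGroup β] {C : Finset (ι → β)}

theorem sum_const_add (h : IsSelfComplementary C) {M : Type*} [AddCommMonoid M]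
    (f : (ι → β) → M) (ω : β) : ∑ c ∈ C, f ((fun _ => ω) + c) = ∑ c ∈ C, f c :=
  sum_nbij' (fun c => (fun _ => ω) + c) (fun c => (fun _ => -ω) + c)
    (fun c hc => h c hc ω) (fun c hc => h c hc (-ω))
    (fun c _ => by ext; simp) (fun c _ => by ext; simp) fun _ _ => rfl

theorem exists_hammingDist_eq_zero [Fintype ι] [Subsingleton ι] [DecidableEq β]
    (h : IsSelfComplementary C) (hne : C.Nonempty) (x : ι → β) :
    ∃ c ∈ C, hammingDist x c = 0 := by
  obtain ⟨c, hc⟩ := hne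
  rcases isEmpty_or_nonempty ι with hι | ⟨⟨i⟩⟩
  · exact ⟨c, hc, hammingDist_eq_zero.2 (Subsingleton.elim x c)⟩
  · refine ⟨_, h c hc (x i - c i), hammingDist_eq_zero.2 (funext fun j => ?_)⟩
    simp [Subsingleton.elim j i]

end IsSelfComplementary

end SelfComplementary

theorem exists_mem_card_add_sqrt_le_mul_agreement {ι β : Type*} [Fintype ι] [Nontrivial ι]
    [AddGroup β] [Fintype β] [DecidableEq β] [Nontrivial β]
    {C : Finset (ι → β)} (hne : C.Nonempty) (hC : IsSelfComplementary C) {lam : ℕ}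
    (hstr : HasStrengthTwo C lam) (x : ι → β) :
    ∃ c ∈ C, (Fintype.card ι : ℝ) + √(Fintype.card ι) ≤ Fintype.card β * agreement x c := by
  set n := Fintype.card ι
  set q := Fintype.card β
  obtain ⟨c₀, hc₀, hmax⟩ := C.exists_max_image (agreement x) hne
  set M : ℝ := (agreement x c₀ : ℝ)
  refine ⟨c₀, hc₀, ?_⟩
  have hsum (c : ι → β) : ∑ ω : β, (agreement x ((fun _ => ω) + c) : ℝ) = n := by
    exact_mod_cast sum_agreement_const_add x c
  have hle : ∀ c ∈ C, ∀ ω, (agreement x ((fun _ => ω) + c) : ℝ) ≤ M := fun c hc ω =>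
    Nat.cast_le.2 (hmax _ (hC c hc ω))
  have htotal : ∑ c ∈ C, ∑ ω : β, (agreement x ((fun _ => ω) + c) : ℝ) ^ 2
      = (q : ℝ) * (n * (q * lam + (n - 1) * lam)) := by
    rw [sum_comm]
    simp_rw [hC.sum_const_add fun c => (agreement x c : ℝ) ^ 2]
    rw [sum_const, card_univ, nsmul_eq_mul]
    simp_rw [← Nat.cast_pow]
    rw [← Nat.cast_sum, hstr.sum_agreement_sq x]
    push_cast [Nat.cast_sub (Fintype.card_pos : 0 < n)]
    ring
  have hbound : (q : ℝ) * (n * (q * lam + (n - 1) * lam))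
      ≤ #C * (n ^ 2 - 2 * (q - 1) * M * n + q * (q - 1) * M ^ 2) := by
    rw [← htotal, ← nsmul_eq_mul, ← sum_const]
    exact sum_le_sum fun c hc => by
      simpa using sum_sq_le_of_sum_eq_of_le univ _ (hsum c) fun ω _ => hle c hc ω
  have hcard : (#C : ℝ) = q ^ 2 * lam := by exact_mod_cast hstr.card_eq
  have hlam : (0 : ℝ) < lam := by
    have := hne.card_pos
    rw [hstr.card_eq] at this
    exact_mod_cast pos_of_mul_pos_right this (Nat.zero_le _)
  have hq : (1 : ℝ) < q := by exact_mod_cast Fintype.one_lt_card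
  have hqM : (n : ℝ) ≤ q * M := by
    calc (n : ℝ) = ∑ ω : β, (agreement x ((fun _ => ω) + c₀) : ℝ) := (hsum c₀).symm
      _ ≤ ∑ _ω : β, M := sum_le_sum fun ω _ => hle c₀ hc₀ ω
      _ = q * M := by rw [sum_const, card_univ, nsmul_eq_mul]
  have key : (n : ℝ) ≤ (q * M - n) ^ 2 := by
    have h : 0 ≤ (q * lam * (q - 1)) * ((q * M - n) ^ 2 - n) := by
      rw [hcard] at hbound
      linear_combination hbound
    exact sub_nonneg.1 (nonneg_of_mul_nonneg_right h (by positivity))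
  have hsqrt := Real.sqrt_le_sqrt key
  rw [Real.sqrt_sq (by linarith)] at hsqrt
  linarith

theorem exists_forall_coveringRadius_le_hammingDist {n : ℕ} {F : Type} [Fintype F]
    [DecidableEq F] [Nonempty F] (C : Finset (Fin n → F)) :
    ∃ x, ∀ c ∈ C, coveringRadius C ≤ hammingDist x c := by
  obtain ⟨x, -, hx⟩ := exists_mem_eq_sup univ univ_nonempty
    fun x : Fin n → F => sInf {d : ℕ | ∃ c ∈ C, d = hammingDist x c}
  exact ⟨x, fun c hc => by rw [coveringRadius, hx]; exact Nat.sInf_le ⟨c, hc, rfl⟩⟩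

/-- a self-complementary code of length `n` with strength 2 has covering
radius at most `(q-1)n/q - √n/q`. -/
theorem coveringRadius_le_of_selfComplementary_strength_two
    {F : Type} [Field F] [Fintype F] [DecidableEq F] {n : ℕ}
    (C : Finset (Fin n → F)) (hne : C.Nonempty)
    (hself : ∀ c ∈ C, ∀ ω : F, (fun _ => ω) + c ∈ C)
    (hstr : ∃ lam : ℕ, ∀ i j : Fin n, i ≠ j → ∀ a b : F,
      (C.filter fun c => c i = a ∧ c j = b).card = lam) :
    (coveringRadius C : ℝ) ≤
      ((Fintype.card F : ℝ) - 1) * n / (Fintype.card F : ℝ)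
        - Real.sqrt n / (Fintype.card F : ℝ) := by
  obtain ⟨x, hx⟩ := exists_forall_coveringRadius_le_hammingDist C
  obtain ⟨lam, hlam⟩ := hstr
  have hq : (2 : ℝ) ≤ Fintype.card F := by exact_mod_cast (Fintype.one_lt_card : 1 < Fintype.card F)
  rw [div_sub_div_same, le_div_iff₀ (by linarith)]
  rcases subsingleton_or_nontrivial (Fin n) with hn | hn
  · obtain ⟨c, hc, hxc⟩ := IsSelfComplementary.exists_hammingDist_eq_zero hself hne x
    have hsqrt : √(n : ℝ) ≤ n := by
      have := Fin.subsingleton_iff_le_one.1 hn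
      interval_cases n <;> simp
    have hρ : coveringRadius C = 0 := Nat.eq_zero_of_le_zero (hxc ▸ hx c hc)
    rw [hρ, Nat.cast_zero, zero_mul, sub_nonneg]
    nlinarith
  · obtain ⟨c, hc, hagree⟩ := exists_mem_card_add_sqrt_le_mul_agreement hne hself hlam x
    have hd : (hammingDist x c : ℝ) + agreement x c = n := by
      exact_mod_cast (hammingDist_add_agreement x c).trans (Fintype.card_fin n)
    have hρ : (coveringRadius C : ℝ) ≤ hammingDist x c := by exact_mod_cast hx c hc
    simp only [Fintype.card_fin] at hagree
    nlinarith
end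

section
/- If C is a self-complementary code over F_q of length n and v ∈ F_q^n has Hamming distance at least r from every codeword of C, then r ≤ (q-1)n/q. -/
/-! Translating a word by all constant vectors moves each coordinate through every symbol of the
alphabet exactly once, so the `q` translates of any codeword have total distance `(q - 1) n`
from `v`. All of them lie in `C` and are at distance at least `r` from `v`, hence `q r ≤ (q - 1) n`. -/

open Finset

section Translates

variable {ι F : Type*} [Fintype ι] [Fintype F] [DecidableEq F] [AddGroup F]

theorem card_filter_ne_add_right (a b : F) : #{ω : F | a ≠ ω + b} = Fintype.card F - 1 := by
  have : ({ω : F | a ≠ ω + b} : Finset F) = {a - b}ᶜ := by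
    ext ω
    simp [eq_sub_iff_add_eq, eq_comm]
  rw [this, card_compl, card_singleton]

theorem sum_hammingDist_const_add (v c : ι → F) :
    ∑ ω : F, hammingDist v ((fun _ => ω) + c) = Fintype.card ι * (Fintype.card F - 1) := by
  calc ∑ ω : F, hammingDist v ((fun _ => ω) + c)
      = ∑ i : ι, #{ω : F | v i ≠ ω + c i} := by
        simp only [hammingDist, card_filter, Pi.add_apply]
        exact sum_comm
    _ = Fintype.card ι * (Fintype.card F - 1) := by
        simp only [card_filter_ne_add_right, sum_const, card_univ, smul_eq_mul]

theorem card_mul_le_of_le_hammingDist_const_add {v c : ι → F} {r : ℕ}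
    (hr : ∀ ω : F, r ≤ hammingDist v ((fun _ => ω) + c)) :
    Fintype.card F * r ≤ Fintype.card ι * (Fintype.card F - 1) := by
  rw [← sum_hammingDist_const_add v c]
  simpa using card_nsmul_le_sum univ _ r fun ω _ => hr ω

end Translates

/-- if `C` is a nonempty self-complementary code over `F_q` of length `n` and
`v` has Hamming distance at least `r` from every codeword, then `r ≤ (q-1)n/q`. -/
theorem le_of_selfComplementary
    {F : Type} [Field F] [Fintype F] [DecidableEq F] {n : ℕ}
    (C : Finset (Fin n → F)) (hne : C.Nonempty)
    (hself : ∀ c ∈ C, ∀ ω : F, (fun _ => ω) + c ∈ C)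
    (v : Fin n → F) (r : ℕ) (hr : ∀ c ∈ C, r ≤ hammingDist v c) :
    (r : ℝ) ≤ ((Fintype.card F : ℝ) - 1) * n / (Fintype.card F : ℝ) := by
  obtain ⟨c, hc⟩ := hne
  have hle : Fintype.card F * r ≤ n * (Fintype.card F - 1) := by
    simpa using card_mul_le_of_le_hammingDist_const_add fun ω => hr _ (hself c hc ω)
  have hq : (0 : ℝ) < Fintype.card F := by exact_mod_cast Fintype.card_pos
  rw [le_div_iff₀ hq]
  have hle' := (Nat.cast_le (α := ℝ)).2 hle
  push_cast [Nat.cast_sub Fintype.card_pos] at hle'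
  linarith
end

section
/- For every prime power q and every m ≥ 1, the covering radius of the first-order generalized Reed–Muller code R_q(1,m) (as a code of length q^m) satisfies ρ(1,m) ≤ (q-1)q^{m-1} − q^{m/2 - 1}. -/
/-!
For `f : F^n → F` let `N(a, b)` count the points where `f` agrees with `x ↦ a ⬝ᵥ x + b`.
For each slope `a` the counts `N(a, ·)` add up to `q^n`, and `∑ N(a, b)^2` is obtained by double
counting pairs of points: two distinct points `x, y` are on the graphs of exactly `q^(n-1)` of these
functions, one for each solution `a` of `a ⬝ᵥ (x - y) = f x - f y`. So the deviations
`N(a, b) - q^(n-1)` have square sum `(q-1) q^(2n-1)`. A row of zero-sum deviations bounded above by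
`t` has square sum at most `q(q-1) t^2`, so the largest deviation satisfies `t^2 ≥ q^(n-2)`: some
affine function agrees with `f` in at least `q^(n-1) + q^(n/2-1)` points.
-/

open Finset

/-- The covering radius of the first-order generalized Reed–Muller code `R_q(1,m)`:
the maximum over all functions `f : F_q^m → F_q` of the minimum Hamming distance
from `f` to an affine function. -/
noncomputable def rmCoveringRadius (F : Type) [Field F] [Fintype F] [DecidableEq F]
    (m : ℕ) : ℕ :=
  Finset.univ.sup fun f : (Fin m → F) → F =>
    sInf {d : ℕ | ∃ a : Fin m → F, ∃ b : F,
      d = hammingDist f (fun x => (∑ i, a i * x i) + b)}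

theorem Finset.sum_card_fiber_sq {α β : Type*} [Fintype α] [Fintype β] [DecidableEq β]
    (g : α → β) : ∑ y, #{x | g x = y} ^ 2 = #{p : α × α | g p.1 = g p.2} := by
  simp only [sq, card_eq_sum_ones, sum_filter, sum_mul_sum, Fintype.sum_prod_type]
  rw [sum_comm]
  refine sum_congr rfl fun x _ => ?_
  rw [sum_comm]
  refine sum_congr rfl fun x' _ => ?_
  simp [eq_comm]

theorem Finset.sum_card_filter_comm {α β : Type*} [Fintype α] [Fintype β] (r : α → β → Prop)
    [∀ a b, Decidable (r a b)] : ∑ a, #{b | r a b} = ∑ b, #{a | r a b} :=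
  sum_card_bipartiteAbove_eq_sum_card_bipartiteBelow r

theorem sum_sq_le_of_sum_eq_zero {R : Type*} [CommRing R] [LinearOrder R] [IsStrictOrderedRing R]
    {κ : Type*} [Fintype κ] {e : κ → R} {t : R} (hsum : ∑ i, e i = 0) (hle : ∀ i, e i ≤ t) :
    ∑ i, e i ^ 2 ≤ (Fintype.card κ : R) * (Fintype.card κ - 1) * t ^ 2 := by
  classical
  set k : R := (Fintype.card κ : R)
  have hlow : ∀ i, -((k - 1) * t) ≤ e i := by
    intro i
    have hrest : ∑ j ∈ univ.erase i, e j ≤ (k - 1) * t := by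
      have := sum_le_card_nsmul (univ.erase i) e t fun j _ => hle j
      rwa [card_erase_of_mem (mem_univ i), card_univ, nsmul_eq_mul,
        Nat.cast_pred (Fintype.card_pos_iff.2 ⟨i⟩)] at this
    linarith [add_sum_erase univ e (mem_univ i)]
  -- `(t - e i) (e i + (k - 1) t) ≥ 0`, and the linear term vanishes after summation
  have hpoint : ∀ i, e i ^ 2 ≤ (k - 1) * t ^ 2 + (2 - k) * t * e i := fun i => by
    nlinarith [mul_nonneg (sub_nonneg.2 (hle i)) (neg_le_iff_add_nonneg.1 (hlow i))]
  calc ∑ i, e i ^ 2 ≤ ∑ i, ((k - 1) * t ^ 2 + (2 - k) * t * e i) := sum_le_sum fun i _ => hpoint i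
    _ = k * (k - 1) * t ^ 2 := by
      rw [sum_add_distrib, ← mul_sum _ e, hsum, sum_const, card_univ, nsmul_eq_mul]
      ring

theorem Real.mul_rpow_half_sub_one_sq {x : ℝ} (hx : 0 < x) {n : ℕ} (hn : 1 ≤ n) :
    x * (x ^ ((n : ℝ) / 2 - 1)) ^ 2 = x ^ (n - 1) := by
  rw [← Real.rpow_natCast, ← Real.rpow_natCast x, ← Real.rpow_mul hx.le, mul_comm,
    ← Real.rpow_add_one hx.ne']
  congr 1
  push_cast [hn]
  ring

variable {ι F : Type*} [Fintype ι] [DecidableEq ι] [Field F] [Fintype F] [DecidableEq F]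

theorem card_dotProduct_eq_of_ne_zero {v : ι → F} (hv : v ≠ 0) (c : F) :
    #{a : ι → F | a ⬝ᵥ v = c} = Fintype.card F ^ (Fintype.card ι - 1) := by
  obtain ⟨j, hj⟩ := Function.ne_iff.mp hv
  let φ : (ι → F) →+ F := AddMonoidHom.mk' (· ⬝ᵥ v) fun a b => add_dotProduct a b v
  have hφ : Function.Surjective φ := fun c =>
    ⟨Pi.single j (c / v j), by simp [φ, single_dotProduct, div_mul_cancel₀ _ hj]⟩
  have hfiber : ∀ c', #{a | φ a = c'} = #{a | φ a = c} := fun c' =>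
    AddMonoidHom.card_fiber_eq_of_mem_range φ (hφ c') (hφ c)
  have htotal : Fintype.card F * #{a | φ a = c} = Fintype.card F ^ Fintype.card ι := by
    calc Fintype.card F * #{a | φ a = c} = ∑ c', #{a | φ a = c'} := by simp [hfiber]
      _ = Fintype.card F ^ Fintype.card ι := by simp [sum_card_fiberwise_eq_card_filter]
  have hι : 1 ≤ Fintype.card ι := Fintype.card_pos_iff.mpr ⟨j⟩
  rw [← Nat.sub_add_cancel hι, pow_succ'] at htotal
  exact Nat.eq_of_mul_eq_mul_left Fintype.card_pos htotal

def affineAgreements (f : (ι → F) → F) (a : ι → F) (b : F) : ℕ := #{x | f x = a ⬝ᵥ x + b}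

section AffineAgreements

variable (f : (ι → F) → F)

local notation "n" => Fintype.card ι

theorem affineAgreements_eq_card_fiber (a : ι → F) (b : F) :
    affineAgreements f a b = #{x | f x - a ⬝ᵥ x = b} := by
  simp only [affineAgreements, sub_eq_iff_eq_add']

theorem hammingDist_add_affineAgreements (a : ι → F) (b : F) :
    hammingDist f (fun x => a ⬝ᵥ x + b) + affineAgreements f a b =
      Fintype.card F ^ n := by
  rw [hammingDist, affineAgreements, add_comm, card_filter_add_card_filter_not, card_univ,
    Fintype.card_fun]

theorem sum_affineAgreements (a : ι → F) :
    ∑ b, affineAgreements f a b = Fintype.card F ^ n := by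
  simp [affineAgreements_eq_card_fiber, sum_card_fiberwise_eq_card_filter]

theorem sum_card_dotProduct_sub_eq (x : ι → F) :
    ∑ y, #{a : ι → F | a ⬝ᵥ (x - y) = f x - f y} =
      Fintype.card F ^ n +
        (Fintype.card F ^ n - 1) * Fintype.card F ^ (n - 1) := by
  rw [← add_sum_erase univ _ (mem_univ x), sum_const_nat fun y hy =>
    card_dotProduct_eq_of_ne_zero (sub_ne_zero.2 (ne_of_mem_erase hy).symm) _]
  simp [card_erase_of_mem]

theorem sum_sum_affineAgreements_sq :
    ∑ a, ∑ b, affineAgreements f a b ^ 2 =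
      Fintype.card F ^ n * (Fintype.card F ^ n +
        (Fintype.card F ^ n - 1) * Fintype.card F ^ (n - 1)) := by
  have hpair : ∀ (a : ι → F) (x y : ι → F),
      f x - a ⬝ᵥ x = f y - a ⬝ᵥ y ↔ a ⬝ᵥ (x - y) = f x - f y := fun a x y => by
    rw [sub_eq_sub_iff_sub_eq_sub, dotProduct_sub, eq_comm]
  calc ∑ a, ∑ b, affineAgreements f a b ^ 2
      = ∑ a, #{p : (ι → F) × (ι → F) | f p.1 - a ⬝ᵥ p.1 = f p.2 - a ⬝ᵥ p.2} := by
        simp only [affineAgreements_eq_card_fiber, sum_card_fiber_sq]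
    _ = ∑ p : (ι → F) × (ι → F), #{a : ι → F | a ⬝ᵥ (p.1 - p.2) = f p.1 - f p.2} := by
        rw [sum_card_filter_comm]
        simp only [hpair]
    _ = _ := by
        rw [Fintype.sum_prod_type]
        simp only [sum_card_dotProduct_sub_eq, sum_const, card_univ, Fintype.card_fun, smul_eq_mul]

local notation "q" => (Fintype.card F : ℝ)

theorem sum_sum_affineAgreements_sub_sq (hn : 1 ≤ n) :
    ∑ a, ∑ b, ((affineAgreements f a b : ℝ) - q ^ (n - 1)) ^ 2 = (q - 1) * q ^ n * q ^ (n - 1) := by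
  have hq : q * q ^ (n - 1) = q ^ n := by rw [← pow_succ', Nat.sub_add_cancel hn]
  have hsq : ∑ a, ∑ b, (affineAgreements f a b : ℝ) ^ 2 =
      q ^ n * (q ^ n + (q ^ n - 1) * q ^ (n - 1)) := by
    have := congrArg (Nat.cast : ℕ → ℝ) (sum_sum_affineAgreements_sq f)
    push_cast [Nat.one_le_pow _ _ Fintype.card_pos] at this
    exact this
  have hsum : ∀ a, ∑ b, (affineAgreements f a b : ℝ) = q ^ n := fun a => by
    exact_mod_cast sum_affineAgreements f a
  simp only [sub_sq, sum_add_distrib, sum_sub_distrib, ← sum_mul, ← mul_sum, hsum, hsq, sum_const,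
    card_univ, Fintype.card_fun, nsmul_eq_mul]
  push_cast
  linear_combination (q ^ n * q ^ (n - 1) - q ^ n) * hq

theorem exists_affineAgreements_ge (hn : 1 ≤ n) :
    ∃ a b, q ^ (n - 1) + q ^ ((n : ℝ) / 2 - 1) ≤ affineAgreements f a b := by
  obtain ⟨⟨a₀, b₀⟩, hmax⟩ := Finite.exists_max fun p : (ι → F) × F => affineAgreements f p.1 p.2
  refine ⟨a₀, b₀, ?_⟩
  set t : ℝ := affineAgreements f a₀ b₀ - q ^ (n - 1)
  have hq : 1 < q := by exact_mod_cast Fintype.one_lt_card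
  have hle : ∀ a b, (affineAgreements f a b : ℝ) - q ^ (n - 1) ≤ t := fun a b =>
    sub_le_sub_right (Nat.cast_le.2 (hmax (a, b))) _
  have hzero : ∀ a, ∑ b, ((affineAgreements f a b : ℝ) - q ^ (n - 1)) = 0 := fun a => by
    have hsum : ∑ b, (affineAgreements f a b : ℝ) = q ^ n := by
      exact_mod_cast sum_affineAgreements f a
    rw [sum_sub_distrib, hsum, sum_const, card_univ, nsmul_eq_mul, ← pow_succ',
      Nat.sub_add_cancel hn, sub_self]
  have ht : 0 ≤ t := by
    have := sum_le_card_nsmul univ _ t fun b _ => hle a₀ b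
    rw [hzero, card_univ, nsmul_eq_mul] at this
    nlinarith
  have hvar : (q - 1) * q ^ n * q ^ (n - 1) ≤ (q - 1) * q ^ n * (q * t ^ 2) := by
    rw [← sum_sum_affineAgreements_sub_sq f hn]
    calc _ ≤ ∑ _a : ι → F, q * (q - 1) * t ^ 2 :=
          sum_le_sum fun a _ => sum_sq_le_of_sum_eq_zero (hzero a) (hle a)
      _ = _ := by simp only [sum_const, card_univ, Fintype.card_fun, nsmul_eq_mul]; push_cast; ring
  have hsq : q * (q ^ ((n : ℝ) / 2 - 1)) ^ 2 ≤ q * t ^ 2 := by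
    rw [Real.mul_rpow_half_sub_one_sq (by linarith) hn]
    exact le_of_mul_le_mul_left hvar (by positivity)
  have hs : q ^ ((n : ℝ) / 2 - 1) ≤ t :=
    (pow_le_pow_iff_left₀ (by positivity) ht two_ne_zero).1
      (le_of_mul_le_mul_left hsq (by linarith))
  linarith

theorem exists_hammingDist_affine_le (hn : 1 ≤ n) :
    ∃ (a : ι → F) (b : F), (hammingDist f (fun x => a ⬝ᵥ x + b) : ℝ) ≤
      (q - 1) * q ^ (n - 1) - q ^ ((n : ℝ) / 2 - 1) := by
  obtain ⟨a, b, hab⟩ := exists_affineAgreements_ge f hn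
  refine ⟨a, b, ?_⟩
  have hdist : (hammingDist f (fun x => a ⬝ᵥ x + b) : ℝ) + affineAgreements f a b = q ^ n := by
    exact_mod_cast hammingDist_add_affineAgreements f a b
  have hq : q ^ n = q * q ^ (n - 1) := by rw [← pow_succ', Nat.sub_add_cancel hn]
  linarith

end AffineAgreements

/-- `ρ(1,m) ≤ (q-1)q^{m-1} - q^{m/2-1}`. -/
theorem rmCoveringRadius_le
    {F : Type} [Field F] [Fintype F] [DecidableEq F] {m : ℕ} (hm : 1 ≤ m) :
    (rmCoveringRadius F m : ℝ) ≤
      ((Fintype.card F : ℝ) - 1) * (Fintype.card F : ℝ) ^ (m - 1)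
        - (Fintype.card F : ℝ) ^ ((m : ℝ) / 2 - 1) := by
  obtain ⟨f, -, hf⟩ := exists_mem_eq_sup univ univ_nonempty fun f : (Fin m → F) → F =>
    sInf {d : ℕ | ∃ a : Fin m → F, ∃ b : F, d = hammingDist f (fun x => (∑ i, a i * x i) + b)}
  obtain ⟨a, b, hab⟩ := exists_hammingDist_affine_le f (by simpa using hm)
  rw [rmCoveringRadius, hf]
  refine le_trans (Nat.cast_le.2 (Nat.sInf_le ⟨a, b, rfl⟩)) ?_
  simpa [dotProduct] using hab
end

section
/- For every prime power q and every m ≥ 1, the covering radius of R_q(1,m) satisfies ρ(1,m) ≥ (q-1)q^{m-1} − q^{⌈m/2⌉−1}. -/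
open Finset Polynomial

theorem exists_forall_trace_mul_eq {K L : Type*} [Field K] [Field L] [Algebra K L]
    [FiniteDimensional K L] [Algebra.IsSeparable K L] (φ : L →ₗ[K] K) :
    ∃ a : L, ∀ z, Algebra.trace K L (a * z) = φ z :=
  ⟨_, LinearMap.BilinForm.apply_toDual_symm_apply (hB := traceForm_nondegenerate K L) φ⟩

section Counting

variable {K : Type*} [Field K] [Fintype K] [DecidableEq K]

theorem card_filter_pow_eq_eval_le (p : K[X]) {n : ℕ} (hp : p.natDegree < n) :
    #{x | x ^ n = p.eval x} ≤ n := by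
  have hmonic : (X ^ n - p).Monic :=
    monic_X_pow_sub (degree_le_natDegree.trans_lt (by exact_mod_cast hp))
  calc #{x | x ^ n = p.eval x} ≤ (X ^ n - p).natDegree := by
        refine card_le_degree_of_subset_roots fun x hx => ?_
        rw [mem_roots hmonic.ne_zero]
        simp_all
    _ = n := by rw [natDegree_sub_eq_left_of_natDegree_lt (by simpa using hp), natDegree_X_pow]

theorem card_filter_sub_mul_sub_eq (α β r : K) :
    #{p : K × K | (p.1 - α) * (p.2 - β) = r} =
      Fintype.card K - 1 + if r = 0 then Fintype.card K else 0 := by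
  have hfiber : ∀ x, #{y | (x - α) * (y - β) = r} =
      if x = α then (if r = 0 then Fintype.card K else 0) else 1 := by
    intro x
    split_ifs with hx hr
    · simp [hx, hr]
    · simp [hx, Ne.symm hr]
    · have hx' := sub_ne_zero.2 hx
      rw [card_eq_one]
      refine ⟨β + r / (x - α), ?_⟩
      ext y
      simp only [mem_filter, mem_univ, true_and, mem_singleton]
      constructor
      · intro h
        field_simp
        linear_combination h
      · rintro rfl
        field_simp
        ring
  rw [card_filter, Fintype.sum_prod_type]
  simp_rw [← card_filter, hfiber]
  rw [sum_ite]
  simp [filter_ne', filter_eq', add_comm]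

end Counting

section Agreement

variable {K V W : Type*} [Field K] [DecidableEq K] [AddCommGroup V] [Module K V] [Fintype V]
  [AddCommGroup W] [Module K W] [Fintype W]

def AgreesWithAffineAtMost (f : V → K) (B : ℕ) : Prop :=
  ∀ (φ : V →ₗ[K] K) (c : K), #{v | f v = φ v + c} ≤ B

theorem AgreesWithAffineAtMost.mono {f : V → K} {B B' : ℕ} (h : AgreesWithAffineAtMost f B)
    (hB : B ≤ B') : AgreesWithAffineAtMost f B' :=
  fun φ c => (h φ c).trans hB

theorem AgreesWithAffineAtMost.comp_linearEquiv {f : V → K} {B : ℕ}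
    (h : AgreesWithAffineAtMost f B) (e : W ≃ₗ[K] V) : AgreesWithAffineAtMost (f ∘ e) B := by
  intro φ c
  calc #{w | (f ∘ e) w = φ w + c} = #{v | f v = φ (e.symm v) + c} :=
        card_equiv e.toEquiv (by simp)
    _ ≤ B := h (φ ∘ₗ e.symm.toLinearMap) c

theorem AgreesWithAffineAtMost.prod_add_mul [Fintype K] {f : V → K} {B : ℕ}
    (h : AgreesWithAffineAtMost f B) :
    AgreesWithAffineAtMost (fun w : V × K × K => f w.1 + w.2.1 * w.2.2)
      ((Fintype.card K - 1) * Fintype.card V + Fintype.card K * B) := by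
  intro φ c
  set α := φ (0, 1, 0)
  set β := φ (0, 0, 1)
  set ψ := φ ∘ₗ LinearMap.inl K V (K × K)
  have hφ : ∀ v x y, φ (v, x, y) = ψ v + x * α + y * β := fun v x y => by
    have hsplit : ((v, x, y) : V × K × K) = (v, 0, 0) + x • (0, 1, 0) + y • (0, 0, 1) := by
      ext <;> simp
    rw [hsplit, map_add, map_add, map_smul, map_smul, smul_eq_mul, smul_eq_mul]
    rfl
  set r : V → K := fun v => ψ v + (c + α * β) - f v
  have hr : ∀ v x y, f v + x * y = φ (v, x, y) + c ↔ (x - β) * (y - α) = r v := fun v x y => by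
    rw [hφ]
    constructor <;> intro h <;> linear_combination h
  have hr0 : ∀ v, r v = 0 ↔ f v = ψ v + (c + α * β) := fun v => by
    rw [sub_eq_zero, eq_comm]
  calc #{w : V × K × K | f w.1 + w.2.1 * w.2.2 = φ w + c}
      = ∑ v, #{p : K × K | (p.1 - β) * (p.2 - α) = r v} := by
        rw [card_filter, Fintype.sum_prod_type]
        simp_rw [← card_filter, hr]
    _ = ∑ v, (Fintype.card K - 1 + if r v = 0 then Fintype.card K else 0) := by
        simp_rw [card_filter_sub_mul_sub_eq]
    _ = (Fintype.card K - 1) * Fintype.card V +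
          Fintype.card K * #{v | f v = ψ v + (c + α * β)} := by
        rw [sum_add_distrib, sum_const, card_univ, smul_eq_mul, mul_comm, ← sum_filter, sum_const,
          smul_eq_mul, mul_comm (#_)]
        simp_rw [hr0]
    _ ≤ _ := by gcongr; exact h ψ _

theorem agreesWithAffineAtMost_sq [Fintype K] :
    AgreesWithAffineAtMost (fun x : K => x ^ 2) 2 := by
  intro φ c
  have hφ : ∀ x, φ x + c = (C (φ 1) * X + C c).eval x := fun x => by
    rw [eval_add, eval_mul, eval_C, eval_X, eval_C, mul_comm, ← smul_eq_mul, ← φ.map_smul,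
      smul_eq_mul, mul_one]
  simp only [hφ]
  exact card_filter_pow_eq_eval_le _ (natDegree_linear_le.trans_lt one_lt_two)

theorem agreesWithAffineAtMost_norm [Fintype K] {L : Type*} [Field L] [Fintype L] [Algebra K L]
    (hL : Module.finrank K L = 2) :
    AgreesWithAffineAtMost (Algebra.norm K : L → K) (Fintype.card K + 1) := by
  classical
  intro φ c
  have hq : Nat.card K = Fintype.card K := Nat.card_eq_fintype_card
  obtain ⟨a, ha⟩ := exists_forall_trace_mul_eq φ
  set P : L[X] := C a * X + C (a ^ Fintype.card K) * X ^ Fintype.card K + C (algebraMap K L c)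
  have hP : P.natDegree < Fintype.card K + 1 := by
    refine Nat.lt_succ_of_le ?_
    simp only [P]
    compute_degree
    exact max_le Fintype.card_pos le_rfl
  have hφ : ∀ z, algebraMap K L (φ z + c) = P.eval z := fun z => by
    rw [← ha, map_add, FiniteField.algebraMap_trace_eq_sum_pow, hL, hq]
    simp [P, Finset.sum_range_succ, mul_pow]
  have hN : ∀ z, algebraMap K L (Algebra.norm K z) = z ^ (Fintype.card K + 1) := fun z => by
    simp [FiniteField.algebraMap_norm_eq_pow_sum, hL, Finset.sum_range_succ, add_comm]
  calc #{z | Algebra.norm K z = φ z + c} = #{z | z ^ (Fintype.card K + 1) = P.eval z} := by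
        simp_rw [← hN, ← hφ, (algebraMap K L).injective.eq_iff]
    _ ≤ Fintype.card K + 1 := card_filter_pow_eq_eval_le P hP

end Agreement

section ReedMuller

variable {F : Type} [Field F] [Fintype F] [DecidableEq F]

theorem exists_agreesWithAffineAtMost : ∀ m, 1 ≤ m → ∃ f : (Fin m → F) → F,
    AgreesWithAffineAtMost f (Fintype.card F ^ (m - 1) + Fintype.card F ^ ((m + 1) / 2 - 1))
  | 1, _ => ⟨_, (agreesWithAffineAtMost_sq.comp_linearEquiv
      (LinearEquiv.ofFinrankEq _ _ (by simp))).mono (by simp)⟩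
  | 2, _ => by
    have := Fact.mk (CharP.char_is_prime F (ringChar F))
    let L := FiniteField.Extension F (ringChar F) 2
    have := Fintype.ofFinite L
    have hL : Module.finrank F L = 2 := FiniteField.finrank_extension F (ringChar F) 2
    exact ⟨_, ((agreesWithAffineAtMost_norm hL).comp_linearEquiv
      (LinearEquiv.ofFinrankEq _ _ (by simp [hL]))).mono (by simp)⟩
  | m + 3, _ => by
    obtain ⟨f, hf⟩ := exists_agreesWithAffineAtMost (m + 1) (by omega)
    refine ⟨_, (hf.prod_add_mul.comp_linearEquiv
      (LinearEquiv.ofFinrankEq _ _ (by simp))).mono (le_of_eq ?_)⟩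
    obtain ⟨k, hk⟩ : ∃ k, Fintype.card F = k + 1 :=
      ⟨_, (Nat.succ_pred_eq_of_pos Fintype.card_pos).symm⟩
    rw [hk, Fintype.card_fun, Fintype.card_fin, hk]
    have h1 : (m + 1 + 1) / 2 - 1 = m / 2 := by omega
    have h2 : (m + 3 + 1) / 2 - 1 = m / 2 + 1 := by omega
    have h3 : m + 3 - 1 = m + 2 := rfl
    simp only [h1, h2, h3, Nat.add_sub_cancel]
    ring

theorem pow_le_rmCoveringRadius_add {m : ℕ} {f : (Fin m → F) → F} {B : ℕ}
    (hf : AgreesWithAffineAtMost f B) : Fintype.card F ^ m ≤ rmCoveringRadius F m + B := by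
  obtain ⟨a, b, hd⟩ := Nat.sInf_mem (⟨_, 0, 0, rfl⟩ : {d : ℕ | ∃ a : Fin m → F, ∃ b : F,
      d = hammingDist f (fun x => (∑ i, a i * x i) + b)}.Nonempty)
  have hρ : hammingDist f (fun x => (∑ i, a i * x i) + b) ≤ rmCoveringRadius F m :=
    hd ▸ Finset.le_sup (f := fun g : (Fin m → F) → F => sInf {d : ℕ | ∃ a : Fin m → F, ∃ b : F,
      d = hammingDist g (fun x => (∑ i, a i * x i) + b)}) (mem_univ f)
  calc Fintype.card F ^ m
      = #{x | f x = dotProductEquiv F (Fin m) a x + b} +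
          hammingDist f (fun x => (∑ i, a i * x i) + b) := by
        have h := card_filter_add_card_filter_not (s := univ)
          (fun x => f x = dotProductEquiv F (Fin m) a x + b)
        rw [card_univ, Fintype.card_fun, Fintype.card_fin] at h
        exact h.symm
    _ ≤ B + rmCoveringRadius F m := add_le_add (hf _ b) hρ
    _ = rmCoveringRadius F m + B := add_comm _ _

end ReedMuller

/-- `ρ(1,m) ≥ (q-1)q^{m-1} - q^{⌈m/2⌉-1}` (note `⌈m/2⌉ = (m+1)/2`). -/
theorem rmCoveringRadius_ge
    {F : Type} [Field F] [Fintype F] [DecidableEq F] {m : ℕ} (hm : 1 ≤ m) :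
    ((Fintype.card F : ℝ) - 1) * (Fintype.card F : ℝ) ^ (m - 1)
        - (Fintype.card F : ℝ) ^ ((m + 1) / 2 - 1) ≤ (rmCoveringRadius F m : ℝ) := by
  obtain ⟨f, hf⟩ := exists_agreesWithAffineAtMost (F := F) m hm
  have h : (Fintype.card F : ℝ) ^ m ≤ rmCoveringRadius F m +
      (Fintype.card F ^ (m - 1) + Fintype.card F ^ ((m + 1) / 2 - 1)) := by
    exact_mod_cast pow_le_rmCoveringRadius_add hf
  have hm' : (Fintype.card F : ℝ) ^ m = Fintype.card F * Fintype.card F ^ (m - 1) := by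
    rw [← pow_succ', Nat.sub_add_cancel hm]
  linarith
end

section
/- Let q be a prime power, m ≥ 1, and let q_0 be a quadratic form on F_q^m of odd rank r. Then the Hamming distance from q_0 (viewed as a word of length q^m) to the affine code R_q(1,m) equals (q-1)q^{m-1} − q^{m−(r+1)/2}. -/
open Finset

variable {F : Type} [Field F] [Fintype F] [DecidableEq F]

private lemma lin_count {n : ℕ} (c : Fin n → F) (hc : c ≠ 0) (b : F) :
    (univ.filter fun u : Fin n → F => ∑ i, c i * u i = b).card = Fintype.card F ^ (n - 1) := by
  obtain ⟨i0, hi0⟩ : ∃ i, c i ≠ 0 := by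
    by_contra h; push_neg at h; exact hc (funext h)
  have hsing : ∀ d : F, ∑ i, c i * (if i = i0 then d else (0:F)) = c i0 * d := by
    intro d
    rw [Finset.sum_congr rfl (fun i _ => by rw [mul_ite, mul_zero])]
    simpa using Finset.sum_ite_eq' univ i0 (fun i => c i * d)
  have key : ∀ b' : F, (univ.filter fun u : Fin n → F => ∑ i, c i * u i = b').card
      = (univ.filter fun u : Fin n → F => ∑ i, c i * u i = 0).card := by
    intro b'
    apply Finset.card_bij' (fun u _ => fun i => u i - (if i = i0 then b' / c i0 else 0))
      (fun u _ => fun i => u i + (if i = i0 then b' / c i0 else 0))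
    · intro u hu
      simp only [mem_filter, mem_univ, true_and] at hu ⊢
      have : (∑ i, c i * (u i - if i = i0 then b' / c i0 else 0))
          = (∑ i, c i * u i) - ∑ i, c i * (if i = i0 then b' / c i0 else (0:F)) := by
        rw [← Finset.sum_sub_distrib]; exact Finset.sum_congr rfl fun i _ => by ring
      rw [this, hu, hsing, mul_div_cancel₀ _ hi0, sub_self]
    · intro u hu
      simp only [mem_filter, mem_univ, true_and] at hu ⊢
      have : (∑ i, c i * (u i + if i = i0 then b' / c i0 else 0))
          = (∑ i, c i * u i) + ∑ i, c i * (if i = i0 then b' / c i0 else (0:F)) := by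
        rw [← Finset.sum_add_distrib]; exact Finset.sum_congr rfl fun i _ => by ring
      rw [this, hu, hsing, mul_div_cancel₀ _ hi0, zero_add]
    · intro u _; funext i; simp
    · intro u _; funext i; simp
  have total : (univ : Finset (Fin n → F)).card
      = ∑ b' : F, (univ.filter fun u : Fin n → F => ∑ i, c i * u i = b').card :=
    Finset.card_eq_sum_card_fiberwise (fun x _ => mem_univ _)
  have hq : 0 < Fintype.card F := Fintype.card_pos
  have hn : 1 ≤ n := i0.pos
  have htot2 : Fintype.card F ^ n
      = Fintype.card F * (univ.filter fun u : Fin n → F => ∑ i, c i * u i = 0).card := by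
    calc Fintype.card F ^ n = (univ : Finset (Fin n → F)).card := by
          rw [Finset.card_univ, Fintype.card_fun, Fintype.card_fin]
      _ = ∑ b' : F, (univ.filter fun u : Fin n → F => ∑ i, c i * u i = b').card := total
      _ = ∑ _b' : F, (univ.filter fun u : Fin n → F => ∑ i, c i * u i = 0).card :=
          Finset.sum_congr rfl fun b' _ => key b'
      _ = Fintype.card F * (univ.filter fun u : Fin n → F => ∑ i, c i * u i = 0).card := by
          rw [Finset.sum_const, Finset.card_univ, smul_eq_mul]
  have hpow : Fintype.card F ^ n = Fintype.card F * Fintype.card F ^ (n - 1) := by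
    rw [← pow_succ']; congr 1; exact (Nat.succ_pred_eq_of_pos hn).symm
  rw [key b]
  exact Nat.eq_of_mul_eq_mul_left hq (htot2.symm.trans hpow)

private lemma lin_count' {n : ℕ} (c : Fin n → F) (b : F) :
    (univ.filter fun u : Fin n → F => ∑ i, c i * u i = b).card =
      if c = 0 then (if b = 0 then Fintype.card F ^ n else 0) else Fintype.card F ^ (n - 1) := by
  split_ifs with h1 h2
  · have : (univ.filter fun u : Fin n → F => ∑ i, c i * u i = b) = univ := by
      rw [Finset.filter_true_of_mem]; intro u _; simp [h1, h2]
    rw [this, card_univ, Fintype.card_fun, Fintype.card_fin]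
  · have : (univ.filter fun u : Fin n → F => ∑ i, c i * u i = b) = ∅ := by
      rw [Finset.filter_false_of_mem]; intro u _; simp [h1]; exact fun h => h2 h.symm
    rw [this, Finset.card_empty]
  · exact lin_count c h1 b

private lemma quad_roots_le (a : F) (ha : a ≠ 0) (C β : F) :
    (univ.filter fun z : F => a * z ^ 2 = C * z + β).card ≤ 2 := by
  set p : Polynomial F := Polynomial.C a * Polynomial.X ^ 2
      + Polynomial.C (-C) * Polynomial.X + Polynomial.C (-β) with hp
  have hdeg : p.natDegree = 2 := Polynomial.natDegree_quadratic ha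
  have hpne : p ≠ 0 := by
    intro h; rw [h, Polynomial.natDegree_zero] at hdeg; omega
  have hsub : (univ.filter fun z : F => a * z ^ 2 = C * z + β) ⊆ p.roots.toFinset := by
    intro z hz
    simp only [mem_filter, mem_univ, true_and] at hz
    rw [Multiset.mem_toFinset, Polynomial.mem_roots hpne]
    simp only [Polynomial.IsRoot, hp, Polynomial.eval_add, Polynomial.eval_mul,
      Polynomial.eval_pow, Polynomial.eval_C, Polynomial.eval_X]
    linear_combination hz
  calc (univ.filter fun z : F => a * z ^ 2 = C * z + β).card
      ≤ p.roots.toFinset.card := Finset.card_le_card hsub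
    _ ≤ Multiset.card p.roots := Multiset.toFinset_card_le _
    _ ≤ p.natDegree := p.card_roots'
    _ = 2 := hdeg

private lemma quad_roots_eq (a : F) (ha : a ≠ 0) :
    (univ.filter fun z : F => a * z ^ 2 = a * z).card = 2 := by
  have hset : (univ.filter fun z : F => a * z ^ 2 = a * z) = {0, 1} := by
    ext z
    simp only [mem_filter, mem_univ, true_and, mem_insert, mem_singleton]
    constructor
    · intro h
      have h2 : z ^ 2 = z := mul_left_cancel₀ ha h
      have h3 : z * (z - 1) = 0 := by linear_combination h2
      rcases mul_eq_zero.1 h3 with h | h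
      · exact Or.inl h
      · exact Or.inr (by linear_combination h)
    · rintro (rfl | rfl) <;> ring
  rw [hset]
  rw [Finset.card_insert_of_notMem (by simp), Finset.card_singleton]

private lemma M_le (a : F) (ha : a ≠ 0) {t : ℕ} (C : F) (D : Fin t → F) (β : F) :
    (univ.filter fun r : F × (Fin t → F) =>
        a * r.1 ^ 2 = C * r.1 + (∑ j, D j * r.2 j) + β).card ≤ 2 * Fintype.card F ^ t := by
  rw [Finset.card_filter, Fintype.sum_prod_type]
  by_cases hD : D = 0
  · subst hD
    have key : ∀ z : F,
        (∑ w : Fin t → F, if a * z ^ 2 = C * z + (∑ j, (0 : Fin t → F) j * w j) + β then 1 else 0)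
        = if a * z ^ 2 = C * z + β then Fintype.card F ^ t else 0 := by
      intro z
      simp only [Pi.zero_apply, zero_mul, Finset.sum_const_zero, add_zero]
      by_cases hz : a * z ^ 2 = C * z + β
      · simp [hz, Fintype.card_fun]
      · simp [hz]
    rw [Finset.sum_congr rfl fun z _ => key z]
    rw [Finset.sum_ite, Finset.sum_const_zero, add_zero, Finset.sum_const, smul_eq_mul]
    exact Nat.mul_le_mul_right _ (quad_roots_le a ha C β)
  · have ht : t ≠ 0 := by rintro rfl; exact hD (funext fun j => j.elim0)
    have key : ∀ z : F,
        (∑ w : Fin t → F, if a * z ^ 2 = C * z + (∑ j, D j * w j) + β then 1 else 0)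
        = Fintype.card F ^ (t - 1) := by
      intro z
      rw [← Finset.card_filter]
      have heq : (univ.filter fun w : Fin t → F => a * z ^ 2 = C * z + (∑ j, D j * w j) + β)
          = univ.filter fun w : Fin t → F => ∑ j, D j * w j = a * z ^ 2 - C * z - β := by
        apply Finset.filter_congr
        intro w _
        constructor <;> intro h <;> linear_combination -h
      rw [heq, lin_count D hD]
    rw [Finset.sum_congr rfl fun z _ => key z, Finset.sum_const, card_univ, smul_eq_mul]
    have hpw : Fintype.card F * Fintype.card F ^ (t - 1) = Fintype.card F ^ t := by
      rw [← pow_succ']; congr 1; omega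
    rw [hpw]
    omega

private lemma M_eq (a : F) (ha : a ≠ 0) {t : ℕ} :
    (univ.filter fun r : F × (Fin t → F) =>
        a * r.1 ^ 2 = a * r.1).card = 2 * Fintype.card F ^ t := by
  rw [Finset.card_filter, Fintype.sum_prod_type]
  have key : ∀ z : F, (∑ _w : Fin t → F, if a * z ^ 2 = a * z then 1 else 0)
      = if a * z ^ 2 = a * z then Fintype.card F ^ t else 0 := by
    intro z
    by_cases hz : a * z ^ 2 = a * z
    · simp [hz, Fintype.card_fun]
    · simp [hz]
  rw [Finset.sum_congr rfl fun z _ => key z]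
  rw [Finset.sum_ite, Finset.sum_const_zero, add_zero, Finset.sum_const, smul_eq_mul]
  rw [quad_roots_eq a ha]

private lemma countP_eq (a : F) {s t : ℕ} (A B : Fin s → F) (C : F) (D : Fin t → F) (β : F) :
    (univ.filter fun p : ((Fin s → F) × F × (Fin t → F)) × (Fin s → F) =>
        (∑ i, p.2 i * p.1.1 i) + a * p.1.2.1 ^ 2 =
          (∑ i, A i * p.2 i) + (∑ i, B i * p.1.1 i) + C * p.1.2.1
            + (∑ j, D j * p.1.2.2 j) + β).card
      = (Fintype.card F ^ s - 1) * (Fintype.card F ^ (1 + t) * Fintype.card F ^ (s - 1))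
        + Fintype.card F ^ s *
          (univ.filter fun r : F × (Fin t → F) =>
            a * r.1 ^ 2 = C * r.1 + (∑ j, D j * r.2 j) + (β + ∑ i, B i * A i)).card := by
  rw [Finset.card_filter, Fintype.sum_prod_type]
  have hsub : ∀ (u v : Fin s → F),
      (∑ i, (v i - A i) * u i) = (∑ i, u i * v i) - ∑ i, A i * u i := by
    intro u v; rw [← Finset.sum_sub_distrib]; exact Finset.sum_congr rfl fun i _ => by ring
  have inner : ∀ r : (Fin s → F) × F × (Fin t → F),
      (∑ u : Fin s → F, if (∑ i, u i * r.1 i) + a * r.2.1 ^ 2 =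
          (∑ i, A i * u i) + (∑ i, B i * r.1 i) + C * r.2.1
            + (∑ j, D j * r.2.2 j) + β then 1 else 0)
      = if r.1 = A
          then (if a * r.2.1 ^ 2 = C * r.2.1 + (∑ j, D j * r.2.2 j) + (β + ∑ i, B i * A i)
                then Fintype.card F ^ s else 0)
          else Fintype.card F ^ (s - 1) := by
    intro r
    rw [← Finset.card_filter]
    have heq : (univ.filter fun u : Fin s → F => (∑ i, u i * r.1 i) + a * r.2.1 ^ 2 =
          (∑ i, A i * u i) + (∑ i, B i * r.1 i) + C * r.2.1 + (∑ j, D j * r.2.2 j) + β)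
        = univ.filter fun u : Fin s → F => ∑ i, (fun k => r.1 k - A k) i * u i =
            (∑ i, B i * r.1 i) + C * r.2.1 + (∑ j, D j * r.2.2 j) + β - a * r.2.1 ^ 2 := by
      apply Finset.filter_congr
      intro u _
      rw [show (∑ i, (fun k => r.1 k - A k) i * u i) = ∑ i, (r.1 i - A i) * u i from rfl,
        hsub u r.1]
      constructor <;> intro h <;> linear_combination h
    rw [heq, lin_count']
    by_cases hv : r.1 = A
    · have hc0 : (fun k => r.1 k - A k) = 0 := by funext i; simp [hv]
      rw [if_pos hc0, if_pos hv]
      have hcond : ((∑ i, B i * r.1 i) + C * r.2.1 + (∑ j, D j * r.2.2 j) + β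
            - a * r.2.1 ^ 2 = 0)
          ↔ (a * r.2.1 ^ 2 = C * r.2.1 + (∑ j, D j * r.2.2 j) + (β + ∑ i, B i * A i)) := by
        rw [hv]
        constructor <;> intro h <;> linear_combination -h
      rw [if_congr hcond rfl rfl]
    · have hc0 : (fun k => r.1 k - A k) ≠ 0 := by
        intro h
        apply hv
        funext i
        have := congrFun h i
        simpa [sub_eq_zero] using this
      rw [if_neg hc0, if_neg hv]
  rw [Finset.sum_congr rfl fun r _ => inner r, Fintype.sum_prod_type]
  have outer : ∀ v : Fin s → F, (∑ zw : F × (Fin t → F), if v = A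
        then (if a * zw.1 ^ 2 = C * zw.1 + (∑ j, D j * zw.2 j) + (β + ∑ i, B i * A i)
              then Fintype.card F ^ s else 0)
        else Fintype.card F ^ (s - 1))
      = if v = A
          then Fintype.card F ^ s *
            (univ.filter fun r : F × (Fin t → F) =>
              a * r.1 ^ 2 = C * r.1 + (∑ j, D j * r.2 j) + (β + ∑ i, B i * A i)).card
          else Fintype.card F ^ (1 + t) * Fintype.card F ^ (s - 1) := by
    intro v
    by_cases hv : v = A
    · simp only [if_pos hv]
      rw [Finset.sum_ite, Finset.sum_const_zero, add_zero, Finset.sum_const, smul_eq_mul]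
      rw [mul_comm]
    · simp only [if_neg hv]
      rw [Finset.sum_const, card_univ, Fintype.card_prod, Fintype.card_fun, Fintype.card_fin,
        smul_eq_mul, pow_add, pow_one]
  rw [Finset.sum_congr rfl fun v _ => outer v]
  rw [Finset.sum_ite, Finset.sum_const, Finset.sum_const, smul_eq_mul, smul_eq_mul]
  have h1 : (univ.filter fun v : Fin s → F => v = A).card = 1 := by
    rw [Finset.filter_eq', if_pos (mem_univ A), Finset.card_singleton]
  have h2 : (univ.filter fun v : Fin s → F => ¬ v = A).card = Fintype.card F ^ s - 1 := by
    have htot := Finset.card_filter_add_card_filter_not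
      (s := (univ : Finset (Fin s → F))) (p := fun v => v = A)
    have hcu : (univ : Finset (Fin s → F)).card = Fintype.card F ^ s := by
      rw [card_univ, Fintype.card_fun, Fintype.card_fin]
    omega
  rw [h1, h2, one_mul, add_comm]

private def splitEquiv (F : Type) {s t m : ℕ} (hm : 2 * s + 1 + t = m) :
    (((Fin s → F) × F × (Fin t → F)) × (Fin s → F)) ≃ (Fin m → F) where
  toFun p := fun k =>
    if h1 : k.val < 2 * s then
      (if k.val % 2 = 0 then p.2 ⟨k.val / 2, by omega⟩ else p.1.1 ⟨k.val / 2, by omega⟩)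
    else if h2 : k.val = 2 * s then p.1.2.1
    else p.1.2.2 ⟨k.val - (2 * s + 1), by have := k.isLt; omega⟩
  invFun y :=
    ((fun i => y ⟨2 * i.val + 1, by have := i.isLt; omega⟩,
      y ⟨2 * s, by omega⟩,
      fun j => y ⟨2 * s + 1 + j.val, by have := j.isLt; omega⟩),
     fun i => y ⟨2 * i.val, by have := i.isLt; omega⟩)
  left_inv := by
    rintro ⟨⟨v, z, w⟩, u⟩
    dsimp only
    simp only [Prod.mk.injEq]
    refine ⟨⟨funext fun i => ?_, ?_, funext fun j => ?_⟩, funext fun i => ?_⟩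
    · have hi := i.isLt
      rw [dif_pos (by omega : 2 * i.val + 1 < 2 * s), if_neg (by omega)]
      congr 1
      refine Fin.ext ?_
      simp only [Fin.val_mk]
      omega
    · rw [dif_neg (by omega)]
      simp
    · have hj := j.isLt
      rw [dif_neg (by omega), dif_neg (by omega)]
      congr 1
      refine Fin.ext ?_
      simp only [Fin.val_mk]
      omega
    · have hi := i.isLt
      rw [dif_pos (by omega : 2 * i.val < 2 * s), if_pos (by omega)]
      congr 1
      refine Fin.ext ?_
      simp only [Fin.val_mk]
      omega
  right_inv := by
    intro y
    funext k
    dsimp only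
    have hk := k.isLt
    by_cases h1 : k.val < 2 * s
    · rw [dif_pos h1]
      by_cases h2 : k.val % 2 = 0
      · rw [if_pos h2]; congr 1; refine Fin.ext ?_; simp only [Fin.val_mk]; omega
      · rw [if_neg h2]; congr 1; refine Fin.ext ?_; simp only [Fin.val_mk]; omega
    · by_cases h2 : k.val = 2 * s
      · rw [dif_neg h1, dif_pos h2]; congr 1; exact Fin.ext h2.symm
      · rw [dif_neg h1, dif_neg h2]; congr 1; refine Fin.ext ?_; simp only [Fin.val_mk]; omega

private lemma splitEquiv_u {s t m : ℕ} (hm : 2 * s + 1 + t = m)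
    (p : ((Fin s → F) × F × (Fin t → F)) × (Fin s → F)) (i : Fin s) (h : 2 * i.val < m) :
    splitEquiv F hm p ⟨2 * i.val, h⟩ = p.2 i := by
  conv_rhs => rw [← (splitEquiv F hm).symm_apply_apply p]
  rfl

private lemma splitEquiv_v {s t m : ℕ} (hm : 2 * s + 1 + t = m)
    (p : ((Fin s → F) × F × (Fin t → F)) × (Fin s → F)) (i : Fin s) (h : 2 * i.val + 1 < m) :
    splitEquiv F hm p ⟨2 * i.val + 1, h⟩ = p.1.1 i := by
  conv_rhs => rw [← (splitEquiv F hm).symm_apply_apply p]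
  rfl

private lemma splitEquiv_z {s t m : ℕ} (hm : 2 * s + 1 + t = m)
    (p : ((Fin s → F) × F × (Fin t → F)) × (Fin s → F)) (h : 2 * s < m) :
    splitEquiv F hm p ⟨2 * s, h⟩ = p.1.2.1 := by
  conv_rhs => rw [← (splitEquiv F hm).symm_apply_apply p]
  rfl

private lemma splitEquiv_w {s t m : ℕ} (hm : 2 * s + 1 + t = m)
    (p : ((Fin s → F) × F × (Fin t → F)) × (Fin s → F)) (j : Fin t) (h : 2 * s + 1 + j.val < m) :
    splitEquiv F hm p ⟨2 * s + 1 + j.val, h⟩ = p.1.2.2 j := by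
  conv_rhs => rw [← (splitEquiv F hm).symm_apply_apply p]
  rfl

private lemma sum_split {s t m : ℕ} (hm : 2 * s + 1 + t = m) (g : Fin m → F) :
    ∑ k, g k = (((∑ i : Fin s, g ⟨2 * i.val, by have := i.isLt; omega⟩)
      + ∑ i : Fin s, g ⟨2 * i.val + 1, by have := i.isLt; omega⟩)
      + g ⟨2 * s, by omega⟩)
      + ∑ j : Fin t, g ⟨2 * s + 1 + j.val, by have := j.isLt; omega⟩ := by
  classical
  let ι : Fin s ⊕ Fin s ⊕ Unit ⊕ Fin t → Fin m := fun x =>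
    match x with
    | .inl i => ⟨2 * i.val, by have := i.isLt; omega⟩
    | .inr (.inl i) => ⟨2 * i.val + 1, by have := i.isLt; omega⟩
    | .inr (.inr (.inl _)) => ⟨2 * s, by omega⟩
    | .inr (.inr (.inr j)) => ⟨2 * s + 1 + j.val, by have := j.isLt; omega⟩
  have hb : Function.Bijective ι := by
    rw [Fintype.bijective_iff_injective_and_card]
    constructor
    · rintro (i | i | u | j) (i' | i' | u' | j') h <;>
        simp only [ι, Fin.mk.injEq] at h <;>
        first
          | (cases u; cases u'; rfl)
          | (omega)
          | (simp only [Sum.inl.injEq, Sum.inr.injEq]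
             exact Fin.ext (by omega))
    · simp only [Fintype.card_sum, Fintype.card_fin, Fintype.card_unit]
      omega
  have htot := (Fintype.sum_bijective ι hb (fun x => g (ι x)) g (fun x => rfl)).symm
  rw [htot, Fintype.sum_sum_type, Fintype.sum_sum_type, Fintype.sum_sum_type,
    Fintype.sum_unique (fun u : Unit => g (ι (Sum.inr (Sum.inr (Sum.inl u)))))]
  have e1 : (∑ i : Fin s, g (ι (Sum.inl i)))
      = ∑ i : Fin s, g ⟨2 * i.val, by have := i.isLt; omega⟩ :=
    Finset.sum_congr rfl fun i _ => rfl
  have e2 : (∑ i : Fin s, g (ι (Sum.inr (Sum.inl i))))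
      = ∑ i : Fin s, g ⟨2 * i.val + 1, by have := i.isLt; omega⟩ :=
    Finset.sum_congr rfl fun i _ => rfl
  have e3 : g (ι (Sum.inr (Sum.inr (Sum.inl ())))) = g ⟨2 * s, by omega⟩ := rfl
  have e4 : (∑ j : Fin t, g (ι (Sum.inr (Sum.inr (Sum.inr j)))))
      = ∑ j : Fin t, g ⟨2 * s + 1 + j.val, by have := j.isLt; omega⟩ :=
    Finset.sum_congr rfl fun j _ => rfl
  rw [e1, e2, e3, e4]
  ring

private lemma card_transfer {s t m : ℕ} (hm : 2 * s + 1 + t = m) (a : F) (c : Fin m → F)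
    (β : F) (A B : Fin s → F) (C : F) (D : Fin t → F)
    (hA : ∀ i : Fin s, A i = c ⟨2 * i.val, by have := i.isLt; omega⟩)
    (hB : ∀ i : Fin s, B i = c ⟨2 * i.val + 1, by have := i.isLt; omega⟩)
    (hC : C = c ⟨2 * s, by omega⟩)
    (hD : ∀ j : Fin t, D j = c ⟨2 * s + 1 + j.val, by have := j.isLt; omega⟩) :
    (univ.filter fun y : Fin m → F =>
        (∑ i : Fin s, y ⟨2 * i.val, by have := i.isLt; omega⟩ *
            y ⟨2 * i.val + 1, by have := i.isLt; omega⟩)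
          + a * y ⟨2 * s, by omega⟩ ^ 2 = (∑ k, c k * y k) + β).card
    = (univ.filter fun p : ((Fin s → F) × F × (Fin t → F)) × (Fin s → F) =>
        (∑ i, p.2 i * p.1.1 i) + a * p.1.2.1 ^ 2 =
          (∑ i, A i * p.2 i) + (∑ i, B i * p.1.1 i) + C * p.1.2.1
            + (∑ j, D j * p.1.2.2 j) + β).card := by
  apply Finset.card_equiv (splitEquiv F hm).symm
  intro y
  simp only [mem_filter, mem_univ, true_and]
  set p := (splitEquiv F hm).symm y with hpdef
  have hy : y = splitEquiv F hm p := (Equiv.apply_symm_apply _ _).symm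
  rw [hy]
  have hQ : (∑ i : Fin s, (splitEquiv F hm p) ⟨2 * i.val, by have := i.isLt; omega⟩ *
        (splitEquiv F hm p) ⟨2 * i.val + 1, by have := i.isLt; omega⟩)
      = ∑ i, p.2 i * p.1.1 i :=
    Finset.sum_congr rfl fun i _ => by rw [splitEquiv_u hm p i, splitEquiv_v hm p i]
  have hz : (splitEquiv F hm p) ⟨2 * s, by omega⟩ = p.1.2.1 := splitEquiv_z hm p (by omega)
  have hL : (∑ k, c k * (splitEquiv F hm p) k)
      = (((∑ i, A i * p.2 i) + ∑ i, B i * p.1.1 i) + C * p.1.2.1)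
          + ∑ j, D j * p.1.2.2 j := by
    rw [sum_split hm (fun k => c k * (splitEquiv F hm p) k)]
    congr 1
    · congr 1
      · congr 1
        · exact Finset.sum_congr rfl fun i _ => by
            rw [splitEquiv_u hm p i, hA i]
        · exact Finset.sum_congr rfl fun i _ => by
            rw [splitEquiv_v hm p i, hB i]
      · rw [splitEquiv_z hm p (by omega), hC]
    · exact Finset.sum_congr rfl fun j _ => by
        rw [splitEquiv_w hm p j, hD j]
  rw [hQ, hz, hL]

private lemma final_eq (q s t : ℕ) (hq : 1 ≤ q) :
    (q ^ s - 1) * (q ^ (1 + t) * q ^ (s - 1)) + q ^ s * (2 * q ^ t)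
      = q ^ (2 * s + t) + q ^ (s + t) := by
  rcases Nat.eq_zero_or_pos s with hs | hs
  · subst hs
    simp
    omega
  · have h1 : q ^ (1 + t) * q ^ (s - 1) = q ^ (s + t) := by rw [← pow_add]; congr 1; omega
    have h2 : q ^ s * q ^ (s + t) = q ^ (2 * s + t) := by rw [← pow_add]; congr 1; omega
    have h4 : q ^ s * (2 * q ^ t) = 2 * q ^ (s + t) := by
      rw [show q ^ s * (2 * q ^ t) = 2 * (q ^ s * q ^ t) by ring, ← pow_add]
    have h7 : q ^ s - 1 + 1 = q ^ s := Nat.succ_pred_eq_of_pos (pow_pos (by omega) s)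
    rw [h1, h4]
    calc (q ^ s - 1) * q ^ (s + t) + 2 * q ^ (s + t)
        = (q ^ s - 1 + 1) * q ^ (s + t) + q ^ (s + t) := by ring
      _ = q ^ s * q ^ (s + t) + q ^ (s + t) := by rw [h7]
      _ = q ^ (2 * s + t) + q ^ (s + t) := by rw [h2]

private lemma final_le (q s t M : ℕ) (hq : 1 ≤ q) (hM : M ≤ 2 * q ^ t) :
    (q ^ s - 1) * (q ^ (1 + t) * q ^ (s - 1)) + q ^ s * M ≤ q ^ (2 * s + t) + q ^ (s + t) := by
  calc (q ^ s - 1) * (q ^ (1 + t) * q ^ (s - 1)) + q ^ s * M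
      ≤ (q ^ s - 1) * (q ^ (1 + t) * q ^ (s - 1)) + q ^ s * (2 * q ^ t) :=
        Nat.add_le_add_left (Nat.mul_le_mul_left _ hM) _
    _ = q ^ (2 * s + t) + q ^ (s + t) := final_eq q s t hq

private lemma pow_split (Q n : ℕ) (hQ : 1 ≤ Q) (hn : 1 ≤ n) :
    Q ^ n = (Q - 1) * Q ^ (n - 1) + Q ^ (n - 1) := by
  obtain ⟨Q', rfl⟩ : ∃ Q', Q = Q' + 1 := ⟨Q - 1, by omega⟩
  obtain ⟨n', rfl⟩ : ∃ n', n = n' + 1 := ⟨n - 1, by omega⟩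
  simp only [Nat.add_sub_cancel]
  rw [pow_succ]
  ring

private lemma arith1 (T G P X Y Q2 N : ℕ) (h1 : T = G + P) (h2 : P = X) (h3 : Q2 = Y)
    (h4 : Y ≤ X) (h5 : N ≤ X + Y) : G - Q2 ≤ T - N := by omega

private lemma arith2 (T G P X Y Q2 N : ℕ) (h1 : T = G + P) (h2 : P = X) (h3 : Q2 = Y)
    (h4 : Y ≤ X) (h5 : N = X + Y) : G - Q2 = T - N := by omega

/-- if `q₀` is a quadratic form on `F_q^m` of odd rank `r = 2s+1`, i.e. in
some linear coordinate system `q₀` reads `x₁x₂ + ⋯ + x_{r-2}x_{r-1} + a x_r²` with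
`a ≠ 0`, then `d(q₀, R_q(1,m)) = (q-1)q^{m-1} - q^{m-(r+1)/2}`. -/
theorem dist_odd_rank_to_affine
    {F : Type} [Field F] [Fintype F] [DecidableEq F] {m s : ℕ}
    (hn : 2 * s + 1 ≤ m) (q0 : (Fin m → F) → F)
    (e : (Fin m → F) ≃ₗ[F] (Fin m → F)) (a : F) (ha : a ≠ 0)
    (hq0 : ∀ x : Fin m → F, q0 x =
      (∑ i : Fin s, (e x) ⟨2 * i.val, by have := i.isLt; omega⟩ *
        (e x) ⟨2 * i.val + 1, by have := i.isLt; omega⟩)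
      + a * (e x) ⟨2 * s, by omega⟩ ^ 2) :
    sInf {d : ℕ | ∃ α : Fin m → F, ∃ β : F,
        d = hammingDist q0 (fun x => (∑ i, α i * x i) + β)} =
      (Fintype.card F - 1) * Fintype.card F ^ (m - 1) - Fintype.card F ^ (m - s - 1) := by
  classical
  set q := Fintype.card F with hqdef
  have hq2 : 2 ≤ q := Fintype.one_lt_card
  set t := m - (2 * s + 1) with htdef
  have hm : 2 * s + 1 + t = m := by omega
  have hq1 : 1 ≤ q := le_trans one_le_two hq2
  -- arithmetic facts
  have hA : q ^ m = (q - 1) * q ^ (m - 1) + q ^ (m - 1) :=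
    pow_split q m hq1 (le_trans (Nat.le_add_left 1 (2 * s)) hn)
  have hp2 : q ^ (m - 1) = q ^ (2 * s + t) := by congr 1; omega
  have hp3 : q ^ (m - s - 1) = q ^ (s + t) := by congr 1; omega
  have hple : q ^ (s + t) ≤ q ^ (2 * s + t) := Nat.pow_le_pow_right hq1 (by omega)
  -- step 1 : change of coordinates via e
  have step1 : ∀ (α : Fin m → F) (β : F) (c : Fin m → F),
      (∀ x, (∑ i, α i * x i) = ∑ k, c k * (e x) k) →
      (univ.filter fun x => q0 x = (∑ i, α i * x i) + β).card
        = (univ.filter fun y : Fin m → F =>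
            (∑ i : Fin s, y ⟨2 * i.val, by have := i.isLt; omega⟩ *
                y ⟨2 * i.val + 1, by have := i.isLt; omega⟩)
              + a * y ⟨2 * s, by omega⟩ ^ 2 = (∑ k, c k * y k) + β).card := by
    intro α β c hc
    apply Finset.card_equiv e.toEquiv
    intro x
    simp only [mem_filter, mem_univ, true_and, LinearEquiv.coe_toEquiv]
    rw [hq0 x, hc x]
  -- the combined counting formula
  have hcard : ∀ (α : Fin m → F) (β : F) (c : Fin m → F),
      (∀ x, (∑ i, α i * x i) = ∑ k, c k * (e x) k) →
      (univ.filter fun x => q0 x = (∑ i, α i * x i) + β).card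
        = (q ^ s - 1) * (q ^ (1 + t) * q ^ (s - 1))
          + q ^ s * (univ.filter fun r : F × (Fin t → F) =>
              a * r.1 ^ 2 = c ⟨2 * s, by omega⟩ * r.1
                + (∑ j, c ⟨2 * s + 1 + j.val, by have := j.isLt; omega⟩ * r.2 j)
                + (β + ∑ i : Fin s, c ⟨2 * i.val + 1, by have := i.isLt; omega⟩ *
                    c ⟨2 * i.val, by have := i.isLt; omega⟩)).card := by
    intro α β c hc
    rw [step1 α β c hc,
      card_transfer hm a c β (fun i => c ⟨2 * i.val, by have := i.isLt; omega⟩)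
        (fun i => c ⟨2 * i.val + 1, by have := i.isLt; omega⟩) (c ⟨2 * s, by omega⟩)
        (fun j => c ⟨2 * s + 1 + j.val, by have := j.isLt; omega⟩)
        (fun i => rfl) (fun i => rfl) rfl (fun j => rfl),
      countP_eq a (fun i => c ⟨2 * i.val, by have := i.isLt; omega⟩)
        (fun i => c ⟨2 * i.val + 1, by have := i.isLt; omega⟩) (c ⟨2 * s, by omega⟩)
        (fun j => c ⟨2 * s + 1 + j.val, by have := j.isLt; omega⟩) β]
  -- existence of coefficients c for arbitrary α
  have hex : ∀ α : Fin m → F, ∃ c : Fin m → F,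
      ∀ x, (∑ i, α i * x i) = ∑ k, c k * (e x) k := by
    intro α
    obtain ⟨ℓ0, hℓ0⟩ : ∃ ℓ0 : (Fin m → F) →ₗ[F] F, ∀ x, ℓ0 x = ∑ i, α i * x i :=
      ⟨{ toFun := fun x => ∑ i, α i * x i,
         map_add' := fun x y => by
           simp only [Pi.add_apply, mul_add, Finset.sum_add_distrib],
         map_smul' := fun r x => by
           simp only [Pi.smul_apply, smul_eq_mul, RingHom.id_apply, Finset.mul_sum]
           exact Finset.sum_congr rfl fun i _ => by ring }, fun x => rfl⟩
    refine ⟨fun k => ℓ0 (e.symm (fun j => if k = j then 1 else 0)), fun x => ?_⟩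
    calc (∑ i, α i * x i) = ℓ0 x := (hℓ0 x).symm
      _ = ℓ0 (e.symm (e x)) := by rw [e.symm_apply_apply]
      _ = (ℓ0.comp (e.symm : (Fin m → F) ≃ₗ[F] (Fin m → F)).toLinearMap) (e x) := rfl
      _ = ∑ k, (e x) k • (ℓ0.comp (e.symm : (Fin m → F) ≃ₗ[F] (Fin m → F)).toLinearMap)
            (fun j => if k = j then 1 else 0) := LinearMap.pi_apply_eq_sum_univ _ (e x)
      _ = ∑ k, ℓ0 (e.symm (fun j => if k = j then 1 else 0)) * (e x) k :=
          Finset.sum_congr rfl fun k _ => by rw [smul_eq_mul]; exact mul_comm _ _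
  -- upper bound on the number of agreements
  have hNle : ∀ (α : Fin m → F) (β : F),
      (univ.filter fun x => q0 x = (∑ i, α i * x i) + β).card
        ≤ q ^ (2 * s + t) + q ^ (s + t) := by
    intro α β
    obtain ⟨c, hc⟩ := hex α
    rw [hcard α β c hc]
    exact final_le q s t _ hq1 (M_le a ha _ _ _)
  -- the witness
  obtain ⟨cw, hcwdef⟩ : ∃ cw : Fin m → F,
      cw = fun k => if k = (⟨2 * s, by omega⟩ : Fin m) then a else 0 := ⟨_, rfl⟩
  obtain ⟨ℓw, hℓw⟩ : ∃ ℓw : (Fin m → F) →ₗ[F] F,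
      ∀ y, ℓw y = a * (e y) ⟨2 * s, by omega⟩ :=
    ⟨a • ((LinearMap.proj (⟨2 * s, by omega⟩ : Fin m)).comp
        (e : (Fin m → F) →ₗ[F] (Fin m → F))), fun y => by simp⟩
  obtain ⟨αw, hαwdef⟩ : ∃ αw : Fin m → F,
      αw = fun k => ℓw (fun j => if k = j then 1 else 0) := ⟨_, rfl⟩
  have hαw : ∀ x, (∑ i, αw i * x i) = ∑ k, cw k * (e x) k := by
    intro x
    have h1 : (∑ k, cw k * (e x) k) = a * (e x) ⟨2 * s, by omega⟩ := by
      simp [hcwdef, ite_mul]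
    have h2 : (∑ i, αw i * x i) = a * (e x) ⟨2 * s, by omega⟩ :=
      calc (∑ i, αw i * x i)
          = ∑ i, x i • ℓw (fun j => if i = j then 1 else 0) := by
            rw [hαwdef]
            exact Finset.sum_congr rfl fun i _ => by
              rw [smul_eq_mul]; exact mul_comm _ _
        _ = ℓw x := (LinearMap.pi_apply_eq_sum_univ ℓw x).symm
        _ = a * (e x) ⟨2 * s, by omega⟩ := hℓw x
    rw [h1, h2]
  have hwval : (univ.filter fun x => q0 x = (∑ i, αw i * x i) + 0).card
      = q ^ (2 * s + t) + q ^ (s + t) := by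
    rw [hcard αw 0 cw hαw]
    have hMv : (univ.filter fun r : F × (Fin t → F) =>
        a * r.1 ^ 2 = cw ⟨2 * s, by omega⟩ * r.1
          + (∑ j, cw ⟨2 * s + 1 + j.val, by have := j.isLt; omega⟩ * r.2 j)
          + ((0:F) + ∑ i : Fin s, cw ⟨2 * i.val + 1, by have := i.isLt; omega⟩ *
              cw ⟨2 * i.val, by have := i.isLt; omega⟩)).card = 2 * q ^ t := by
      have hfe : (univ.filter fun r : F × (Fin t → F) =>
          a * r.1 ^ 2 = cw ⟨2 * s, by omega⟩ * r.1
            + (∑ j, cw ⟨2 * s + 1 + j.val, by have := j.isLt; omega⟩ * r.2 j)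
            + ((0:F) + ∑ i : Fin s, cw ⟨2 * i.val + 1, by have := i.isLt; omega⟩ *
                cw ⟨2 * i.val, by have := i.isLt; omega⟩))
          = univ.filter fun r : F × (Fin t → F) => a * r.1 ^ 2 = a * r.1 := by
        apply Finset.filter_congr
        intro r _
        have h1 : cw (⟨2 * s, by omega⟩ : Fin m) = a := by
          simp [hcwdef]
        have h2 : (∑ j : Fin t, cw ⟨2 * s + 1 + j.val, by have := j.isLt; omega⟩ * r.2 j)
            = 0 := Finset.sum_eq_zero fun j _ => by
          simp only [hcwdef]
          rw [if_neg, zero_mul]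
          intro hj
          have := congrArg Fin.val hj
          simp only [Fin.val_mk] at this
          omega
        have h3 : (∑ i : Fin s, cw ⟨2 * i.val + 1, by have := i.isLt; omega⟩ *
            cw ⟨2 * i.val, by have := i.isLt; omega⟩) = 0 :=
          Finset.sum_eq_zero fun i _ => by
            simp only [hcwdef]
            rw [if_neg, zero_mul]
            · intro hi
              have h4 := congrArg Fin.val hi
              simp only [Fin.val_mk] at h4
              have := i.isLt
              omega
        rw [h1, h2, h3, add_zero, zero_add, add_zero]
      rw [hfe, M_eq a ha]
    rw [hMv]
    exact final_eq q s t hq1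
  -- distance formula
  have hdist : ∀ (α : Fin m → F) (β : F),
      hammingDist q0 (fun x => (∑ i, α i * x i) + β)
        = q ^ m - (univ.filter fun x => q0 x = (∑ i, α i * x i) + β).card := by
    intro α β
    have hsplit : (univ.filter fun x => q0 x = (∑ i, α i * x i) + β).card
        + (univ.filter fun x => ¬ (q0 x = (∑ i, α i * x i) + β)).card
        = (univ : Finset (Fin m → F)).card :=
      Finset.card_filter_add_card_filter_not _
    have hcu : (univ : Finset (Fin m → F)).card = q ^ m := by
      rw [card_univ, Fintype.card_fun, Fintype.card_fin]
    have hdd : hammingDist q0 (fun x => (∑ i, α i * x i) + β)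
        = (univ.filter fun x => ¬ (q0 x = (∑ i, α i * x i) + β)).card := rfl
    rw [hdd]
    rw [hcu] at hsplit
    exact Nat.eq_sub_of_add_eq' hsplit
  refine le_antisymm (Nat.sInf_le ?_) (le_csInf ?_ ?_)
  · refine ⟨αw, 0, ?_⟩
    rw [hdist αw 0, hwval]
    exact arith2 (q ^ m) ((q - 1) * q ^ (m - 1)) (q ^ (m - 1)) (q ^ (2 * s + t))
      (q ^ (s + t)) (q ^ (m - s - 1)) _ hA hp2 hp3 hple rfl
  · exact ⟨_, ⟨αw, 0, rfl⟩⟩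
  · rintro d ⟨α, β, rfl⟩
    rw [hdist α β]
    exact arith1 (q ^ m) ((q - 1) * q ^ (m - 1)) (q ^ (m - 1)) (q ^ (2 * s + t))
      (q ^ (s + t)) (q ^ (m - s - 1)) _ hA hp2 hp3 hple (hNle α β)
end

section
/- For every prime power q, ρ(1,1) = q − 2: the covering radius of the code of affine functions F_q → F_q (of length q) is q − 2. -/
lemma fin1_eq_iff {F : Type} (p r : Fin 1 → F) : p = r ↔ p 0 = r 0 := by
  constructor
  · intro h; rw [h]
  · intro h; funext i; fin_cases i; exact h

lemma card_domain (F : Type) [Fintype F] [DecidableEq F] :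
    Fintype.card (Fin 1 → F) = Fintype.card F := by
  simp

/-- `ρ(1,1) = q - 2`. -/
theorem rmCoveringRadius_one
    {F : Type} [Field F] [Fintype F] [DecidableEq F] :
    rmCoveringRadius F 1 = Fintype.card F - 2 := by
  classical
  have hq2 : 1 < Fintype.card F := Fintype.one_lt_card
  apply le_antisymm
  · apply Finset.sup_le
    intro f _
    obtain ⟨u, v, huv⟩ := Fintype.exists_pair_of_one_lt_card hq2
    set pu : Fin 1 → F := fun _ => u with hpu
    set pv : Fin 1 → F := fun _ => v with hpv
    set s : F := (f pu - f pv) / (u - v) with hs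
    set b : F := f pu - s * u with hb
    set g : (Fin 1 → F) → F := fun x => (∑ i, (fun _ : Fin 1 => s) i * x i) + b with hg
    have hgx : ∀ x, g x = s * x 0 + b := by
      intro x; simp [hg, Fin.sum_univ_one]
    have hguv : u - v ≠ 0 := sub_ne_zero.mpr huv
    have hgu : g pu = f pu := by
      rw [hgx]; simp [hb, hpu]
    have hgv : g pv = f pv := by
      have h1 : s * (u - v) = f pu - f pv := div_mul_cancel₀ _ hguv
      rw [hgx]
      show s * v + b = f pv
      rw [hb]
      linear_combination -h1
    have hmem : hammingDist f g ∈ {d : ℕ | ∃ a : Fin 1 → F, ∃ b' : F,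
        d = hammingDist f (fun x => (∑ i, a i * x i) + b')} :=
      ⟨fun _ => s, b, rfl⟩
    refine le_trans (Nat.sInf_le hmem) ?_
    have hpuv : pu ≠ pv := by
      intro h
      exact huv (congrFun h 0)
    have hsub : (Finset.univ.filter fun x => f x ≠ g x) ⊆
        Finset.univ \ {pu, pv} := by
      intro x hx
      simp only [Finset.mem_filter, Finset.mem_univ, true_and] at hx
      simp only [Finset.mem_sdiff, Finset.mem_univ, true_and, Finset.mem_insert,
        Finset.mem_singleton]
      rintro (rfl | rfl)
      · exact hx hgu.symm
      · exact hx hgv.symm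
    have hcard : (Finset.univ \ ({pu, pv} : Finset (Fin 1 → F))).card
        = Fintype.card F - 2 := by
      rw [Finset.card_sdiff_of_subset (Finset.subset_univ _), Finset.card_univ, card_domain,
        Finset.card_insert_of_notMem (by simpa using hpuv), Finset.card_singleton]
    calc hammingDist f g = (Finset.univ.filter fun x => f x ≠ g x).card := by
            simp [hammingDist]
      _ ≤ (Finset.univ \ ({pu, pv} : Finset (Fin 1 → F))).card :=
            Finset.card_le_card hsub
      _ = Fintype.card F - 2 := hcard
  · set f : (Fin 1 → F) → F := fun x => (x 0) ^ 2 with hf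
    refine le_trans ?_ (Finset.le_sup (Finset.mem_univ f))
    apply le_csInf
    · exact ⟨_, fun _ => 0, 0, rfl⟩
    rintro d ⟨a, b, rfl⟩
    set g : (Fin 1 → F) → F := fun x => (∑ i, a i * x i) + b with hg
    have hgx : ∀ x : Fin 1 → F, g x = a 0 * x 0 + b := by
      intro x; simp [hg, Fin.sum_univ_one]
    have key : (Finset.univ.filter fun x => f x = g x).card ≤ 2 := by
      by_contra h
      push_neg at h
      obtain ⟨x, y, z, hx, hy, hz, hxy, hxz, hyz⟩ := Finset.two_lt_card_iff.mp h
      simp only [Finset.mem_filter, Finset.mem_univ, true_and] at hx hy hz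
      rw [hgx] at hx hy hz
      have hx' : (x 0) ^ 2 = a 0 * x 0 + b := hx
      have hy' : (y 0) ^ 2 = a 0 * y 0 + b := hy
      have hz' : (z 0) ^ 2 = a 0 * z 0 + b := hz
      have hxy0 : x 0 ≠ y 0 := fun h0 => hxy ((fin1_eq_iff x y).mpr h0)
      have hxz0 : x 0 ≠ z 0 := fun h0 => hxz ((fin1_eq_iff x z).mpr h0)
      have e1 : x 0 + y 0 = a 0 :=
        mul_left_cancel₀ (sub_ne_zero.mpr hxy0) (by linear_combination hx' - hy')
      have e2 : x 0 + z 0 = a 0 :=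
        mul_left_cancel₀ (sub_ne_zero.mpr hxz0) (by linear_combination hx' - hz')
      have : y 0 = z 0 := by linear_combination e1 - e2
      exact hyz ((fin1_eq_iff y z).mpr this)
    have hsplit : (Finset.univ.filter fun x => f x = g x).card
        + (Finset.univ.filter fun x => ¬ f x = g x).card = Fintype.card F := by
      rw [Finset.card_filter_add_card_filter_not, Finset.card_univ, card_domain]
    have hdist : hammingDist f g = (Finset.univ.filter fun x => ¬ f x = g x).card := by
      simp [hammingDist]
    omega
end

section
/- For every prime power q and every m ≥ 0, the covering radii of the first-order generalized Reed–Muller codes satisfy the recursion ρ(1,m+2) ≥ (q-1)^2 q^m + q·ρ(1,m). -/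
section RMAux

variable {F : Type} [Field F] [Fintype F] [DecidableEq F]

private lemma rm_hammingDist_comp_equiv {α γ : Type} [Fintype α] [Fintype γ]
    (e : α ≃ γ) (f h : γ → F) :
    hammingDist (f ∘ e) (h ∘ e) = hammingDist f h := by
  simp only [hammingDist]
  exact Finset.card_equiv e (by simp)

private lemma rm_hammingDist_prod {A B : Type} [Fintype A] [Fintype B]
    (f h : A × B → F) :
    hammingDist f h = ∑ a : A, hammingDist (fun b => f (a, b)) (fun b => h (a, b)) := by
  simp only [hammingDist, Finset.card_filter, Fintype.sum_prod_type]

private lemma rm_hammingDist_add_const {α : Type} [Fintype α] (f h : α → F) (c : F) :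
    hammingDist (fun u => f u + c) h = hammingDist f (fun u => h u - c) := by
  simp only [hammingDist]
  refine congrArg Finset.card (Finset.filter_congr fun u _ => ?_)
  simp [Ne, eq_sub_iff_add_eq]

/-- The equivalence `(F × F) × (Fin m → F) ≃ (Fin (m+2) → F)` via double `snoc`. -/
private def rmSnocEquiv (F : Type) (m : ℕ) : ((F × F) × (Fin m → F)) ≃ (Fin (m+2) → F) where
  toFun p := Fin.snoc (Fin.snoc p.2 p.1.1) p.1.2
  invFun x := ((x ((Fin.last m).castSucc), x (Fin.last (m+1))),
    fun i => x (i.castSucc.castSucc))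
  left_inv p := by simp
  right_inv x := by
    funext i
    induction i using Fin.lastCases with
    | last => simp
    | cast i =>
      induction i using Fin.lastCases with
      | last => simp
      | cast i => simp

private lemma rm_sum_snoc {m : ℕ} (a : Fin (m+2) → F) (u : Fin m → F) (y z : F) :
    ∑ i, a i * (Fin.snoc (Fin.snoc u y) z : Fin (m+2) → F) i
    = (∑ j, a (j.castSucc.castSucc) * u j) + a ((Fin.last m).castSucc) * y
      + a (Fin.last (m+1)) * z := by
  rw [Fin.sum_univ_castSucc, Fin.sum_univ_castSucc]
  simp

end RMAux

/-- `ρ(1,m+2) ≥ (q-1)² qᵐ + q·ρ(1,m)`. -/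
theorem rmCoveringRadius_rec
    {F : Type} [Field F] [Fintype F] [DecidableEq F] (m : ℕ) :
    (Fintype.card F - 1) ^ 2 * Fintype.card F ^ m
        + Fintype.card F * rmCoveringRadius F m ≤ rmCoveringRadius F (m + 2) := by
  classical
  set q := Fintype.card F with hq
  have hq1 : 1 ≤ q := Fintype.card_pos
  -- pick a function f₀ achieving the covering radius ρ(1,m)
  obtain ⟨f₀, -, hf₀⟩ := Finset.exists_mem_eq_sup (Finset.univ : Finset ((Fin m → F) → F))
    Finset.univ_nonempty (fun f => sInf {d : ℕ | ∃ a : Fin m → F, ∃ b : F,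
      d = hammingDist f (fun x => (∑ i, a i * x i) + b)})
  set ρ := rmCoveringRadius F m with hρ
  have hρ_le : ∀ (a : Fin m → F) (b : F),
      ρ ≤ hammingDist f₀ (fun x => (∑ i, a i * x i) + b) := by
    intro a b
    have h1 : ρ = sInf {d : ℕ | ∃ a : Fin m → F, ∃ b : F,
        d = hammingDist f₀ (fun x => (∑ i, a i * x i) + b)} := hf₀
    rw [h1]
    exact Nat.sInf_le ⟨a, b, rfl⟩
  -- the witness function g(u, y, z) = f₀(u) + y·z
  set g : (Fin (m+2) → F) → F := fun x =>
    f₀ (fun i => x (i.castSucc.castSucc)) + x ((Fin.last m).castSucc) * x (Fin.last (m+1))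
    with hgdef
  -- key counting bound
  have key : ∀ (a : Fin (m+2) → F) (b : F),
      (q - 1) ^ 2 * q ^ m + q * ρ ≤ hammingDist g (fun x => (∑ i, a i * x i) + b) := by
    intro a b
    set a' : Fin m → F := fun j => a (j.castSucc.castSucc) with ha'
    set β := a ((Fin.last m).castSucc) with hβ
    set γ := a (Fin.last (m+1)) with hγ
    set L : (Fin m → F) → F := fun u => ∑ j, a' j * u j with hL
    set D : F → ℕ := fun t => hammingDist f₀ (fun u => L u + t) with hD
    set t0 : F := b + β * γ with ht0
    have hDρ : ∀ t, ρ ≤ D t := fun t => hρ_le a' t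
    set e := rmSnocEquiv F m with he
    -- slice computation
    have slice : ∀ y z : F,
        hammingDist (fun u => g (e ((y, z), u)))
          (fun u => (∑ i, a i * e ((y, z), u) i) + b)
        = D (β * y + γ * z + b - y * z) := by
      intro y z
      have h1 : (fun u : Fin m → F => g (e ((y, z), u))) = fun u => f₀ u + y * z := by
        funext u
        simp [hgdef, he, rmSnocEquiv]
      have h2 : (fun u : Fin m → F => (∑ i, a i * e ((y, z), u) i) + b)
          = fun u => L u + (β * y + γ * z + b) := by
        funext u
        show (∑ i, a i * (Fin.snoc (Fin.snoc u y) z : Fin (m+2) → F) i) + b = _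
        rw [rm_sum_snoc]
        ring
      rw [h1, h2, rm_hammingDist_add_const]
      simp only [hD]
      congr 1
      funext u
      ring
    -- total distance
    have hdist : hammingDist g (fun x => (∑ i, a i * x i) + b)
        = ∑ p : F × F, D (β * p.1 + γ * p.2 + b - p.1 * p.2) := by
      rw [← rm_hammingDist_comp_equiv e g (fun x => (∑ i, a i * x i) + b),
        rm_hammingDist_prod]
      refine Finset.sum_congr rfl fun p _ => ?_
      exact slice p.1 p.2
    rw [hdist]
    -- rewrite the argument to t0 - (y - γ)(z - β)
    have step1 : ∑ p : F × F, D (β * p.1 + γ * p.2 + b - p.1 * p.2)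
        = ∑ p : F × F, D (t0 - (p.1 - γ) * (p.2 - β)) := by
      refine Finset.sum_congr rfl fun p _ => ?_
      congr 1
      rw [ht0]; ring
    have step2 : ∑ p : F × F, D (t0 - (p.1 - γ) * (p.2 - β))
        = ∑ p : F × F, D (t0 - p.1 * p.2) := by
      simpa using Equiv.sum_comp
        (Equiv.prodCongr (Equiv.subRight γ) (Equiv.subRight β))
        (fun p : F × F => D (t0 - p.1 * p.2))
    rw [step1, step2, Fintype.sum_prod_type]
    -- split off y = 0
    rw [← Finset.add_sum_erase Finset.univ _ (Finset.mem_univ (0 : F))]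
    have hzero : ∑ z : F, D (t0 - 0 * z) = q * D t0 := by
      simp [Finset.sum_const, Finset.card_univ, hq, mul_comm]
    have hT : ∑ t : F, D t = q ^ m * (q - 1) := by
      simp only [hD, hammingDist, Finset.card_filter]
      rw [Finset.sum_comm]
      have hin : ∀ u : Fin m → F,
          (∑ t : F, if f₀ u ≠ L u + t then 1 else 0) = q - 1 := by
        intro u
        rw [← Finset.card_filter]
        have hfe : (Finset.univ.filter fun t : F => f₀ u ≠ L u + t)
            = Finset.univ.erase (f₀ u - L u) := by
          ext t
          simp only [Finset.mem_filter, Finset.mem_univ, true_and, Finset.mem_erase,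
            and_true, ne_eq]
          exact not_congr ⟨fun h' => by rw [h']; ring, fun h' => by rw [h']; ring⟩
        rw [hfe, Finset.card_erase_of_mem (Finset.mem_univ _), Finset.card_univ]
      rw [Finset.sum_congr rfl fun u _ => hin u, Finset.sum_const, Finset.card_univ,
        smul_eq_mul]
      congr 1
      rw [Fintype.card_fun, Fintype.card_fin, hq]
    have hrest : ∑ y ∈ Finset.univ.erase (0 : F), ∑ z : F, D (t0 - y * z)
        = (q - 1) * (q ^ m * (q - 1)) := by
      have : ∀ y ∈ Finset.univ.erase (0 : F), ∑ z : F, D (t0 - y * z) = q ^ m * (q - 1) := by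
        intro y hy
        have hy0 : y ≠ 0 := Finset.ne_of_mem_erase hy
        rw [← hT]
        simpa using Equiv.sum_comp ((Equiv.mulLeft₀ y hy0).trans (Equiv.subLeft t0)) D
      calc ∑ y ∈ Finset.univ.erase (0 : F), ∑ z : F, D (t0 - y * z)
          = ∑ _y ∈ Finset.univ.erase (0 : F), q ^ m * (q - 1) := Finset.sum_congr rfl this
        _ = (q - 1) * (q ^ m * (q - 1)) := by
            rw [Finset.sum_const, Finset.card_erase_of_mem (Finset.mem_univ _),
              Finset.card_univ, smul_eq_mul]
    rw [hzero, hrest]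
    have h1 : (q - 1) ^ 2 * q ^ m = (q - 1) * (q ^ m * (q - 1)) := by ring
    have h2 : q * ρ ≤ q * D t0 := Nat.mul_le_mul le_rfl (hDρ t0)
    calc (q - 1) ^ 2 * q ^ m + q * ρ
        = (q - 1) * (q ^ m * (q - 1)) + q * ρ := by rw [h1]
      _ ≤ (q - 1) * (q ^ m * (q - 1)) + q * D t0 := Nat.add_le_add_left h2 _
      _ = q * D t0 + (q - 1) * (q ^ m * (q - 1)) := Nat.add_comm _ _
  -- conclude
  have h1 : (q - 1) ^ 2 * q ^ m + q * ρ
      ≤ sInf {d : ℕ | ∃ a : Fin (m+2) → F, ∃ b : F,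
        d = hammingDist g (fun x => (∑ i, a i * x i) + b)} := by
    refine le_csInf ⟨_, 0, 0, rfl⟩ ?_
    rintro d ⟨a, b, rfl⟩
    exact key a b
  calc (q - 1) ^ 2 * q ^ m + q * ρ
      ≤ sInf {d : ℕ | ∃ a : Fin (m+2) → F, ∃ b : F,
        d = hammingDist g (fun x => (∑ i, a i * x i) + b)} := h1
    _ ≤ rmCoveringRadius F (m + 2) :=
        Finset.le_sup (f := fun f : (Fin (m+2) → F) → F =>
          sInf {d : ℕ | ∃ a : Fin (m+2) → F, ∃ b : F,
            d = hammingDist f (fun x => (∑ i, a i * x i) + b)}) (Finset.mem_univ g)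
end
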